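/- arXiv:1510.04998 — 8 statements merged into one kernel-verified Lean document; each statement's English description precedes it below -/
import Mathlib

section
/- Let K_B ⊆ cl D be a compact set that is norming for O(cl D) and contained in every compact set norming for O(cl D). Then for every a ∈ I₀ one has {a} × 𝕋 ⊆ K_B; consequently I × 𝕋 ⊆ K_B. -/
open Set Complex

noncomputable section

/-- The bounded Hartogs domain `D ⊂ ℂ²` from the paper. -/
def domD : Set (ℂ × ℂ) :=
  {p | ∃ r φ : ℝ, 1 / 2 < r ∧ r < 1 ∧ 0 < φ ∧ φ < 2 * Real.pi ∧
    p.1 = (r : ℂ) * Complex.exp (φ * Complex.I) ∧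
    (φ ≤ Real.pi / 2 → ‖p.2‖ < 1) ∧
    (Real.pi / 2 < φ → φ < 3 * Real.pi / 2 → ‖p.2‖ < 3) ∧
    (3 * Real.pi / 2 ≤ φ → 2 < ‖p.2‖ ∧ ‖p.2‖ < 3)}

/-- `K` is norming for the family `F` of functions on `closure S`. -/
def IsNorming {E : Type*} [TopologicalSpace E] (S K : Set E) (F : Set (E → ℂ)) : Prop :=
  ∀ f ∈ F, sSup ((fun p => ‖f p‖) '' K) =
    sSup ((fun p => ‖f p‖) '' closure S)

/-- `O(cl S)`: functions extending holomorphically to an open neighborhood of `closure S`. -/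
def Ocl {E : Type*} [NormedAddCommGroup E] [NormedSpace ℂ E] (S : Set E) :
    Set (E → ℂ) :=
  {f | ∃ U : Set E, IsOpen U ∧ closure S ⊆ U ∧ DifferentiableOn ℂ f U}

/-- `A(S)`: functions continuous on `closure S` and holomorphic on `S`. -/
def Acl {E : Type*} [NormedAddCommGroup E] [NormedSpace ℂ E] (S : Set E) :
    Set (E → ℂ) :=
  {f | ContinuousOn f (closure S) ∧ DifferentiableOn ℂ f S}

/-- `K` is the minimal compact norming set for the family `F` on `closure S`
(i.e. the Shilov-type boundary associated with `F`). -/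
def IsShilovFor {E : Type*} [NormedAddCommGroup E] [NormedSpace ℂ E]
    (S : Set E) (F : Set (E → ℂ)) (K : Set E) : Prop :=
  IsCompact K ∧ K ⊆ closure S ∧ IsNorming S K F ∧
    ∀ K' : Set E, IsCompact K' → K' ⊆ closure S → IsNorming S K' F → K ⊆ K'

/-!
Each point `(a, w₀)` with `1/2 < a < 1`, `|w₀| = 1` is a peak point of `O(cl D)`, so every compact
norming set contains it. The two sides `φ = 0` and `φ = 2π` of the slit of `D` are separated in `w`
(`|w| ≤ 1` against `|w| ≥ 2`), so near `cl D` the angle `φ ∈ [0, 2π]` is the imaginary part of a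
holomorphic branch `L` of `log z`. The function `f = w · exp (4iL + w w̄₀ - 1 - (z - a)²)` has
`|f| = |w| exp (-4φ + Re (w w̄₀) - 1 - Re (z - a)²)`, which is `1` at `(a, w₀)`. Where `φ ≤ π/2`
we have `|w| ≤ 1`, `Re (w w̄₀) - 1 ≤ -|w - w₀|²/2` and `(Im z)² ≤ φ`, so
`|f| ≤ exp (-|w - w₀|²/2 - 3φ - (Re z - a)²)`, which is `< 1` away from `(a, w₀)`; where
`φ ≥ π/2` we have `|w| ≤ 3` and `|f| ≤ 3 e^{3 - 2π} < 1`. The endpoints `a = 1/2, 1` follow by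
closedness.
-/

open scoped Real ComplexConjugate

theorem mem_of_isNorming_of_peak {E : Type*} [TopologicalSpace E] {S K : Set E}
    {F : Set (E → ℂ)} (hK : IsCompact K) (hKS : K ⊆ closure S) (hnorm : IsNorming S K F)
    {f : E → ℂ} (hf : f ∈ F) (hfK : ContinuousOn f K) {p₀ : E} (hp₀ : p₀ ∈ closure S)
    (hf₀ : f p₀ ≠ 0) (hpeak : ∀ p ∈ closure S, p ≠ p₀ → ‖f p‖ < ‖f p₀‖) : p₀ ∈ K := by
  have hmax : IsGreatest ((fun p => ‖f p‖) '' closure S) ‖f p₀‖ := by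
    refine ⟨mem_image_of_mem _ hp₀, ?_⟩
    rintro _ ⟨p, hp, rfl⟩
    rcases eq_or_ne p p₀ with rfl | hne
    · exact le_rfl
    · exact (hpeak p hp hne).le
  have hsup := hnorm f hf
  rw [hmax.csSup_eq] at hsup
  have hne : K.Nonempty := by
    rw [nonempty_iff_ne_empty]
    rintro rfl
    rw [image_empty, Real.sSup_empty] at hsup
    exact hf₀ (norm_eq_zero.mp hsup.symm)
  obtain ⟨q, hqK, hq⟩ := hK.exists_sSup_image_eq hne (continuous_norm.comp_continuousOn hfK)
  by_contra hp₀K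
  have hqp : q ≠ p₀ := fun h => hp₀K (h ▸ hqK)
  exact (hpeak q (hKS hqK) hqp).ne (hq.symm.trans hsup)

namespace Complex

lemma log_neg_add_pi_mul_I_of_im_pos {z : ℂ} (hz : 0 < z.im) : log (-z) + π * I = log z := by
  apply Complex.ext <;> simp [log_re, log_im, arg_neg_eq_arg_sub_pi_of_im_pos hz]

lemma log_neg_add_pi_mul_I_of_im_neg {z : ℂ} (hz : z.im < 0) :
    log (-z) + π * I = log z + 2 * π * I := by
  apply Complex.ext <;> simp [log_re, log_im, arg_neg_eq_arg_add_pi_of_im_neg hz]; ring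

lemma im_le_arg {z : ℂ} (hz : ‖z‖ ≤ 1) (him : 0 ≤ z.im) : z.im ≤ arg z := by
  have harg : 0 ≤ arg z := arg_nonneg_iff.mpr him
  have hsin : 0 ≤ Real.sin (arg z) := Real.sin_nonneg_of_nonneg_of_le_pi harg (arg_le_pi z)
  calc z.im = ‖z‖ * Real.sin (arg z) := (norm_mul_sin_arg z).symm
    _ ≤ 1 * Real.sin (arg z) := by gcongr
    _ ≤ arg z := by rw [one_mul]; exact Real.sin_le harg

end Complex

namespace domD

/-- `E₁`, `E₂`, `E₃` contain the closures of the parts of `D` with `φ ∈ (0, π/2]`,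
`(π/2, 3π/2)` and `[3π/2, 2π)`. -/
def E₁ : Set (ℂ × ℂ) :=
  {p | 1 / 2 ≤ ‖p.1‖ ∧ ‖p.1‖ ≤ 1 ∧ 0 ≤ p.1.re ∧ 0 ≤ p.1.im ∧ ‖p.2‖ ≤ 1}

def E₂ : Set (ℂ × ℂ) :=
  {p | 1 / 2 ≤ ‖p.1‖ ∧ ‖p.1‖ ≤ 1 ∧ p.1.re ≤ 0 ∧ ‖p.2‖ ≤ 3}

def E₃ : Set (ℂ × ℂ) :=
  {p | 1 / 2 ≤ ‖p.1‖ ∧ ‖p.1‖ ≤ 1 ∧ 0 ≤ p.1.re ∧ p.1.im ≤ 0 ∧ 2 ≤ ‖p.2‖ ∧ ‖p.2‖ ≤ 3}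

def W₁ : Set (ℂ × ℂ) := {p | ‖p.2‖ < 3 / 2 ∧ 0 < p.1.re + p.1.im}

def W₂ : Set (ℂ × ℂ) := {p | p.1.re < |p.1.im|}

def W₃ : Set (ℂ × ℂ) := {p | 3 / 2 < ‖p.2‖ ∧ p.1.im < p.1.re}

open Classical in
/-- The branch `L` of `log z` with imaginary part `φ ∈ [0, 2π]`. It is holomorphic on
`W₁ ∪ W₂ ∪ W₃`, since the three branches used agree on overlaps:
`W₁ ∩ W₂ ⊆ {0 < Im z}`, `W₂ ∩ W₃ ⊆ {Im z < 0}` and `W₁ ∩ W₃ = ∅`. -/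
def liftLog (p : ℂ × ℂ) : ℂ :=
  if p ∈ W₂ then log (-p.1) + π * I
  else if p ∈ W₃ then log p.1 + 2 * π * I
  else log p.1

lemma isOpen_W₁ : IsOpen W₁ :=
  (isOpen_lt (by fun_prop) continuous_const).and (isOpen_lt continuous_const (by fun_prop))

lemma isOpen_W₂ : IsOpen W₂ := isOpen_lt (by fun_prop) (by fun_prop)

lemma isOpen_W₃ : IsOpen W₃ :=
  (isOpen_lt continuous_const (by fun_prop)).and (isOpen_lt (by fun_prop) (by fun_prop))

lemma isClosed_E : IsClosed (E₁ ∪ E₂ ∪ E₃) := by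
  refine ((?_ : IsClosed E₁).union (?_ : IsClosed E₂)).union (?_ : IsClosed E₃) <;>
    simp only [E₁, E₂, E₃, ofPred_and] <;>
    apply_rules [IsClosed.inter, isClosed_le] <;> fun_prop

lemma E₁_subset_W₁ : E₁ ⊆ W₁ := fun p ⟨hz, _, hx, hy, hw⟩ => by
  have := norm_le_abs_re_add_abs_im p.1
  rw [abs_of_nonneg hx, abs_of_nonneg hy] at this
  exact ⟨by linarith, by linarith⟩

lemma E₂_subset_W₂ : E₂ ⊆ W₂ := fun p ⟨hz, _, hx, _⟩ => by
  have := norm_le_abs_re_add_abs_im p.1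
  rw [abs_of_nonpos hx] at this
  show p.1.re < |p.1.im|
  linarith

lemma E₃_subset_W₃ : E₃ ⊆ W₃ := fun p ⟨hz, _, hx, hy, hw, _⟩ => by
  have := norm_le_abs_re_add_abs_im p.1
  rw [abs_of_nonneg hx, abs_of_nonpos hy] at this
  exact ⟨by linarith, by linarith⟩

lemma E_subset_W : E₁ ∪ E₂ ∪ E₃ ⊆ W₁ ∪ W₂ ∪ W₃ :=
  union_subset_union (union_subset_union E₁_subset_W₁ E₂_subset_W₂) E₃_subset_W₃

lemma liftLog_of_mem_W₂ {p : ℂ × ℂ} (hp : p ∈ W₂) : liftLog p = log (-p.1) + π * I :=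
  if_pos hp

lemma liftLog_of_mem_W₃ {p : ℂ × ℂ} (hp : p ∈ W₃) : liftLog p = log p.1 + 2 * π * I := by
  unfold liftLog
  split_ifs with h₂
  · have : p.1.im < 0 := by
      cases abs_cases p.1.im <;> linarith [hp.2, show p.1.re < |p.1.im| from h₂]
    exact Complex.log_neg_add_pi_mul_I_of_im_neg this
  · rfl

lemma liftLog_of_mem_W₁ {p : ℂ × ℂ} (hp : p ∈ W₁) : liftLog p = log p.1 := by
  have h₃ : p ∉ W₃ := fun h => by linarith [hp.1, h.1]
  unfold liftLog
  split_ifs with h₂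
  · have : 0 < p.1.im := by
      cases abs_cases p.1.im <;> linarith [hp.2, show p.1.re < |p.1.im| from h₂]
    exact Complex.log_neg_add_pi_mul_I_of_im_pos this
  · rfl

lemma differentiableOn_liftLog : DifferentiableOn ℂ liftLog (W₁ ∪ W₂ ∪ W₃) := by
  have h₁ : DifferentiableOn ℂ liftLog W₁ := by
    refine DifferentiableOn.congr (fun p hp => ?_) fun _ => liftLog_of_mem_W₁
    refine (differentiableAt_fst.clog (mem_slitPlane_iff.mpr ?_)).differentiableWithinAt
    by_contra! h
    linarith [hp.2, h.1, h.2]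
  have h₂ : DifferentiableOn ℂ liftLog W₂ := by
    refine DifferentiableOn.congr (fun p hp => ?_) fun _ => liftLog_of_mem_W₂
    refine ((differentiableAt_fst.neg.clog (mem_slitPlane_iff.mpr ?_)).add_const _)
      |>.differentiableWithinAt
    by_contra! h
    simp only [Pi.neg_apply, neg_re, neg_im, neg_nonpos, neg_eq_zero] at h
    have : p.1.re < |p.1.im| := hp
    rw [h.2, abs_zero] at this
    linarith [h.1]
  have h₃ : DifferentiableOn ℂ liftLog W₃ := by
    refine DifferentiableOn.congr (fun p hp => ?_) fun _ => liftLog_of_mem_W₃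
    refine ((differentiableAt_fst.clog (mem_slitPlane_iff.mpr ?_)).add_const _)
      |>.differentiableWithinAt
    by_contra! h
    linarith [hp.2, h.1, h.2]
  exact (h₁.union_of_isOpen h₂ isOpen_W₁ isOpen_W₂).union_of_isOpen h₃
    (isOpen_W₁.union isOpen_W₂) isOpen_W₃

lemma pi_div_two_le_im_liftLog {p : ℂ × ℂ} (hp : p ∈ E₂ ∪ E₃) : π / 2 ≤ (liftLog p).im := by
  rcases hp with hp | hp
  · have h := abs_arg_le_pi_div_two_iff.mpr (show 0 ≤ (-p.1).re by simp [hp.2.2.1])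
    rw [liftLog_of_mem_W₂ (E₂_subset_W₂ hp)]
    simp only [add_im, log_im, mul_I_im, ofReal_re]
    linarith [(abs_le.mp h).1]
  · have h := abs_arg_le_pi_div_two_iff.mpr hp.2.2.1
    rw [liftLog_of_mem_W₃ (E₃_subset_W₃ hp)]
    simp only [add_im, log_im, mul_I_im, mul_re, re_ofNat, ofReal_re, im_ofNat, ofReal_im]
    linarith [(abs_le.mp h).1, Real.pi_pos]

def peakFun (a : ℝ) (w₀ : ℂ) (p : ℂ × ℂ) : ℂ :=
  p.2 * exp (4 * I * liftLog p + (p.2 * conj w₀ - 1) - (p.1 - a) ^ 2)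

lemma norm_peakFun (a : ℝ) (w₀ : ℂ) (p : ℂ × ℂ) :
    ‖peakFun a w₀ p‖ = ‖p.2‖ * Real.exp
      (-(4 * (liftLog p).im) + ((p.2 * conj w₀).re - 1) - (p.1.re - a) ^ 2 + p.1.im ^ 2) := by
  rw [peakFun, norm_mul, norm_exp]
  congr 2
  simp only [add_re, sub_re, mul_re, mul_im, I_re, I_im, ofReal_re, ofReal_im, one_re, sub_im,
    re_ofNat, im_ofNat, pow_two]
  ring

lemma norm_peakFun_self {a : ℝ} (ha : 0 < a) {w₀ : ℂ} (hw₀ : ‖w₀‖ = 1) :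
    ‖peakFun a w₀ ((a : ℂ), w₀)‖ = 1 := by
  have hW : ((a : ℂ), w₀) ∈ W₁ := ⟨by rw [hw₀]; norm_num, by simpa using ha⟩
  rw [norm_peakFun, liftLog_of_mem_W₁ hW, log_im, arg_ofReal_of_nonneg ha.le, mul_conj,
    normSq_eq_norm_sq, hw₀]
  simp

lemma norm_peakFun_lt_one_of_mem_E₁ {a : ℝ} {w₀ : ℂ} (hw₀ : ‖w₀‖ = 1) {p : ℂ × ℂ}
    (hp : p ∈ E₁) (hne : p ≠ ((a : ℂ), w₀)) : ‖peakFun a w₀ p‖ < 1 := by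
  obtain ⟨-, hz, -, hy, hw⟩ := id hp
  have hre : 2 * (p.2 * conj w₀).re = ‖p.2‖ ^ 2 + 1 - ‖p.2 - w₀‖ ^ 2 := by
    have := normSq_sub p.2 w₀
    simp only [normSq_eq_norm_sq, hw₀] at this
    linarith
  have hθ : 0 ≤ arg p.1 := arg_nonneg_iff.mpr hy
  have hyθ : p.1.im ^ 2 ≤ arg p.1 := by
    have h1 : p.1.im ≤ 1 := (im_le_norm p.1).trans hz
    nlinarith [im_le_arg hz hy]
  have hs : 0 < ‖p.2 - w₀‖ ^ 2 / 2 + 3 * arg p.1 + (p.1.re - a) ^ 2 := by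
    by_contra! hs
    have hw₀' : ‖p.2 - w₀‖ ^ 2 = 0 := by nlinarith [sq_nonneg ‖p.2 - w₀‖, sq_nonneg (p.1.re - a)]
    have hθ₀ : arg p.1 = 0 := by nlinarith [sq_nonneg ‖p.2 - w₀‖, sq_nonneg (p.1.re - a)]
    have hx : (p.1.re - a) ^ 2 = 0 := by nlinarith [sq_nonneg ‖p.2 - w₀‖, sq_nonneg (p.1.re - a)]
    refine hne (Prod.ext (Complex.ext ?_ ?_) ?_)
    · simpa [sub_eq_zero] using hx
    · simpa using (arg_eq_zero_iff.mp hθ₀).2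
    · simpa [sub_eq_zero] using hw₀'
  have hL : (liftLog p).im = arg p.1 := by
    rw [liftLog_of_mem_W₁ (E₁_subset_W₁ hp), log_im]
  calc ‖peakFun a w₀ p‖
      ≤ 1 * Real.exp (-(‖p.2 - w₀‖ ^ 2 / 2 + 3 * arg p.1 + (p.1.re - a) ^ 2)) := by
        rw [norm_peakFun, hL]
        refine mul_le_mul hw (Real.exp_le_exp.mpr ?_) (Real.exp_nonneg _) zero_le_one
        nlinarith [norm_nonneg p.2]
    _ < 1 := by rw [one_mul, Real.exp_lt_one_iff]; linarith

lemma norm_peakFun_lt_one_of_mem_E₂₃ (a : ℝ) {w₀ : ℂ} (hw₀ : ‖w₀‖ = 1) {p : ℂ × ℂ}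
    (hp : p ∈ E₂ ∪ E₃) : ‖peakFun a w₀ p‖ < 1 := by
  obtain ⟨hz, hw⟩ : ‖p.1‖ ≤ 1 ∧ ‖p.2‖ ≤ 3 := by
    rcases hp with hp | hp
    · exact ⟨hp.2.1, hp.2.2.2⟩
    · exact ⟨hp.2.1, hp.2.2.2.2.2⟩
  have hre : (p.2 * conj w₀).re ≤ 3 :=
    (re_le_norm _).trans (by rw [norm_mul, norm_conj, hw₀, mul_one]; exact hw)
  have hy : p.1.im ^ 2 ≤ 1 := by
    have := (abs_im_le_norm p.1).trans hz
    nlinarith [abs_nonneg p.1.im, sq_abs p.1.im]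
  have hL := pi_div_two_le_im_liftLog hp
  -- `exp (2π - 3) ≥ 2π - 2 > 3`
  have hexp : 3 * Real.exp (3 - 2 * π) < 1 := by
    have h := Real.add_one_le_exp (2 * π - 3)
    have h' : Real.exp (3 - 2 * π) * Real.exp (2 * π - 3) = 1 := by
      rw [← Real.exp_add]; simp
    nlinarith [Real.pi_gt_three, Real.exp_pos (3 - 2 * π)]
  calc ‖peakFun a w₀ p‖ ≤ 3 * Real.exp (3 - 2 * π) := by
        rw [norm_peakFun]
        refine mul_le_mul hw (Real.exp_le_exp.mpr ?_) (Real.exp_nonneg _) (by norm_num)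
        nlinarith [sq_nonneg (p.1.re - a)]
    _ < 1 := hexp

lemma norm_peakFun_lt_one {a : ℝ} {w₀ : ℂ} (hw₀ : ‖w₀‖ = 1) {p : ℂ × ℂ}
    (hp : p ∈ E₁ ∪ E₂ ∪ E₃) (hne : p ≠ ((a : ℂ), w₀)) : ‖peakFun a w₀ p‖ < 1 := by
  rw [union_assoc] at hp
  rcases hp with hp | hp
  · exact norm_peakFun_lt_one_of_mem_E₁ hw₀ hp hne
  · exact norm_peakFun_lt_one_of_mem_E₂₃ a hw₀ hp

lemma subset_E : domD ⊆ E₁ ∪ E₂ ∪ E₃ := by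
  rintro ⟨z, w⟩ ⟨r, φ, hr₁, hr₂, hφ₁, hφ₂, hz, hw₁, hw₂, hw₃⟩
  dsimp only at hz hw₁ hw₂ hw₃
  have hnorm : ‖z‖ = r := by
    rw [hz, norm_mul, norm_real, Real.norm_of_nonneg (by linarith), norm_exp_ofReal_mul_I,
      mul_one]
  have hre : z.re = r * Real.cos φ := by rw [hz, re_ofReal_mul, exp_ofReal_mul_I_re]
  have him : z.im = r * Real.sin φ := by rw [hz, im_ofReal_mul, exp_ofReal_mul_I_im]
  have hr : 0 ≤ r := by linarith
  have hzn : 1 / 2 ≤ ‖z‖ ∧ ‖z‖ ≤ 1 := by rw [hnorm]; constructor <;> linarith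
  rcases le_or_gt φ (π / 2) with h₁ | h₁
  · refine Or.inl (Or.inl ⟨hzn.1, hzn.2, ?_, ?_, (hw₁ h₁).le⟩)
    · rw [hre]
      exact mul_nonneg hr (Real.cos_nonneg_of_mem_Icc ⟨by linarith, h₁⟩)
    · rw [him]
      exact mul_nonneg hr (Real.sin_nonneg_of_nonneg_of_le_pi hφ₁.le (by linarith))
  rcases lt_or_ge φ (3 * π / 2) with h₂ | h₂
  · refine Or.inl (Or.inr ⟨hzn.1, hzn.2, ?_, (hw₂ h₁ h₂).le⟩)
    rw [hre]
    exact mul_nonpos_of_nonneg_of_nonpos hr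
      (Real.cos_nonpos_of_pi_div_two_le_of_le h₁.le (by linarith))
  · obtain ⟨hwa, hwb⟩ := hw₃ h₂
    refine Or.inr ⟨hzn.1, hzn.2, ?_, ?_, hwa.le, hwb.le⟩
    · rw [hre, ← Real.cos_sub_two_pi]
      exact mul_nonneg hr (Real.cos_nonneg_of_mem_Icc ⟨by linarith, by linarith⟩)
    · rw [him, ← Real.sin_sub_two_pi]
      exact mul_nonpos_of_nonneg_of_nonpos hr
        (Real.sin_nonpos_of_nonpos_of_neg_pi_le (by linarith) (by linarith))

lemma closure_subset_E : closure domD ⊆ E₁ ∪ E₂ ∪ E₃ :=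
  closure_minimal subset_E isClosed_E

lemma mk_mem_closure {a : ℝ} (ha : a ∈ Ioo (1 / 2 : ℝ) 1) {w₀ : ℂ} (hw₀ : ‖w₀‖ = 1) :
    ((a : ℂ), w₀) ∈ closure domD := by
  let γ : ℝ → ℂ × ℂ := fun t => ((a : ℂ) * exp (t * I), ((1 - t : ℝ) : ℂ) * w₀)
  have hγ : ((a : ℂ), w₀) = γ 0 := by simp [γ]
  rw [hγ]
  refine map_mem_closure (s := Ioo 0 1) (by fun_prop) ?_ fun t ⟨ht₀, ht₁⟩ => ?_
  · rw [closure_Ioo zero_ne_one]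
    exact left_mem_Icc.mpr zero_le_one
  have hπ := Real.pi_gt_three
  refine ⟨a, t, ha.1, ha.2, ht₀, by linarith, rfl, fun _ => ?_, fun h _ => by linarith,
    fun h => by linarith⟩
  rw [norm_mul, norm_real, hw₀, mul_one, Real.norm_of_nonneg (by linarith)]
  linarith

lemma peakFun_mem_Ocl (a : ℝ) (w₀ : ℂ) : peakFun a w₀ ∈ Ocl domD := by
  refine ⟨W₁ ∪ W₂ ∪ W₃, (isOpen_W₁.union isOpen_W₂).union isOpen_W₃,
    closure_subset_E.trans E_subset_W, ?_⟩
  have := differentiableOn_liftLog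
  unfold peakFun
  fun_prop

theorem mem_of_isNorming {K : Set (ℂ × ℂ)} (hK : IsCompact K) (hKD : K ⊆ closure domD)
    (hnorm : IsNorming domD K (Ocl domD)) {a : ℝ} (ha : a ∈ Ioo (1 / 2 : ℝ) 1) {w₀ : ℂ}
    (hw₀ : ‖w₀‖ = 1) : ((a : ℂ), w₀) ∈ K := by
  have hpeak := norm_peakFun_self (by linarith [ha.1] : 0 < a) hw₀
  obtain ⟨U, -, hDU, hU⟩ := peakFun_mem_Ocl a w₀
  refine mem_of_isNorming_of_peak hK hKD hnorm (peakFun_mem_Ocl a w₀)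
    (hU.continuousOn.mono (hKD.trans hDU)) (mk_mem_closure ha hw₀)
    (norm_ne_zero_iff.mp (by rw [hpeak]; exact one_ne_zero)) fun p hp hne => ?_
  rw [hpeak]
  exact norm_peakFun_lt_one hw₀ (closure_subset_E hp) hne

end domD

theorem stmt1 (KB : Set (ℂ × ℂ)) (hKB : IsShilovFor domD (Ocl domD) KB) :
    (∀ a : ℝ, a ∈ Ioo (1 / 2 : ℝ) 1 → ∀ w : ℂ, ‖w‖ = 1 → ((a : ℂ), w) ∈ KB) ∧
    (∀ a : ℝ, a ∈ Icc (1 / 2 : ℝ) 1 → ∀ w : ℂ, ‖w‖ = 1 → ((a : ℂ), w) ∈ KB) := by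
  obtain ⟨hK, hKD, hnorm, -⟩ := hKB
  have hIoo : ∀ a : ℝ, a ∈ Ioo (1 / 2 : ℝ) 1 → ∀ w : ℂ, ‖w‖ = 1 → ((a : ℂ), w) ∈ KB :=
    fun a ha w hw => domD.mem_of_isNorming hK hKD hnorm ha hw
  refine ⟨hIoo, fun a ha w hw => ?_⟩
  have hIcc : Icc (1 / 2 : ℝ) 1 ⊆ {t : ℝ | ((t : ℂ), w) ∈ KB} := by
    rw [← closure_Ioo (by norm_num)]
    exact closure_minimal (fun t ht => hIoo t ht w hw) (hK.isClosed.preimage (by fun_prop))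
  exact hIcc ha
end
end

section
/- For every a ∈ I = [1/2, 1] there exists a function g holomorphic on an open neighborhood of cl D such that g(a, w) = 1 for all w with |w| ≤ 1, and |g(z, w)| < 1 for all (z, w) ∈ cl D \ ({a} × cl 𝔻). -/
open Set Complex

noncomputable section

/-! The peak function is `exp (ψ (L - log a))` with `ψ μ = iμ - μ²/16` and `L` a holomorphic
branch of `log z` near `cl D`. Such a branch exists although `cl D` winds around `z = 0`: over
the positive real axis the first sheet of `D` has `|w| ≤ 1` and the last one `2 ≤ |w| ≤ 3`, so
the argument can jump by `2π` across `1 < |w| < 2`. On `cl D` the imaginary part of `L` lies in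
`[0, 2π]` and vanishes only on the positive real axis of the first sheet, while
`Re ψ (x + iy) = -x²/16 - y(16 - y)/16` is negative on the strip `0 ≤ y < 16` away from `0`. -/

theorem Real.lt_pi_div_two_or_three_pi_div_two_lt_of_cos_pos {φ : ℝ} (hcos : 0 < Real.cos φ) :
    φ < Real.pi / 2 ∨ 3 * Real.pi / 2 < φ := by
  by_contra! h
  linarith [Real.cos_nonpos_of_pi_div_two_le_of_le h.1 (by linarith [h.2])]

theorem Real.lt_pi_of_sin_pos {φ : ℝ} (h2π : φ < 2 * Real.pi) (hsin : 0 < Real.sin φ) :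
    φ < Real.pi := by
  by_contra! h
  have := Real.sin_nonpos_of_nonpos_of_neg_pi_le (x := φ - 2 * Real.pi) (by linarith)
    (by linarith)
  rw [Real.sin_sub_two_pi] at this
  linarith

theorem Real.pi_lt_of_sin_neg {φ : ℝ} (h0 : 0 < φ) (hsin : Real.sin φ < 0) : Real.pi < φ := by
  by_contra! h
  linarith [Real.sin_nonneg_of_nonneg_of_le_pi h0.le h]

theorem Complex.log_neg_add_pi_mul_I_of_im_pos_s2 {z : ℂ} (h : 0 < z.im) :
    log (-z) + Real.pi * I = log z := by
  apply Complex.ext <;> simp [log_re, log_im, arg_neg_eq_arg_sub_pi_of_im_pos h]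

theorem Complex.log_neg_add_pi_mul_I_of_im_neg_s2 {z : ℂ} (h : z.im < 0) :
    log (-z) + Real.pi * I = log z + 2 * Real.pi * I := by
  apply Complex.ext <;> simp [log_re, log_im, arg_neg_eq_arg_add_pi_of_im_neg h]; ring

namespace HartogsPeak

def closedSupersetD : Set (ℂ × ℂ) :=
  {p | 1 / 2 ≤ ‖p.1‖ ∧ ‖p.1‖ ≤ 1 ∧ ‖p.2‖ ≤ 3 ∧
    (0 < p.1.re → 0 < p.1.im → ‖p.2‖ ≤ 1) ∧
    (0 < p.1.re → ‖p.2‖ ≤ 1 ∨ 2 ≤ ‖p.2‖) ∧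
    (0 < p.1.re → p.1.im < 0 → 2 ≤ ‖p.2‖)}

theorem isClosed_closedSupersetD : IsClosed closedSupersetD := by
  have hre : Continuous fun p : ℂ × ℂ => p.1.re := by fun_prop
  have him : Continuous fun p : ℂ × ℂ => p.1.im := by fun_prop
  have hz : Continuous fun p : ℂ × ℂ => ‖p.1‖ := by fun_prop
  have hw : Continuous fun p : ℂ × ℂ => ‖p.2‖ := by fun_prop
  refine (isClosed_le continuous_const hz).inter <| (isClosed_le hz continuous_const).inter <|
    (isClosed_le hw continuous_const).inter <| ?_
  refine (isClosed_imp (isOpen_lt continuous_const hre) <| isClosed_imp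
    (isOpen_lt continuous_const him) (isClosed_le hw continuous_const)).inter <| ?_
  exact (isClosed_imp (isOpen_lt continuous_const hre) <|
    (isClosed_le hw continuous_const).union (isClosed_le continuous_const hw)).inter <|
    isClosed_imp (isOpen_lt continuous_const hre) <| isClosed_imp
      (isOpen_lt him continuous_const) (isClosed_le continuous_const hw)

theorem domD_subset_closedSupersetD : domD ⊆ closedSupersetD := by
  rintro ⟨z, w⟩ ⟨r, φ, hr_half, hr_one, hφ0, hφ2π, rfl, hsheet0, hsheet1, hsheet2⟩
  have hr : 0 < r := by linarith
  have hnorm : ‖(r : ℂ) * exp (φ * I)‖ = r := by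
    rw [norm_mul, norm_exp_ofReal_mul_I, Complex.norm_of_nonneg hr.le, mul_one]
  have hre : 0 < ((r : ℂ) * exp (φ * I)).re → 0 < Real.cos φ := fun h => by
    rw [re_ofReal_mul, exp_ofReal_mul_I_re] at h
    exact pos_of_mul_pos_right h hr.le
  have him_pos : 0 < ((r : ℂ) * exp (φ * I)).im → 0 < Real.sin φ := fun h => by
    rw [im_ofReal_mul, exp_ofReal_mul_I_im] at h
    exact pos_of_mul_pos_right h hr.le
  have him_neg : ((r : ℂ) * exp (φ * I)).im < 0 → Real.sin φ < 0 := fun h => by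
    rw [im_ofReal_mul, exp_ofReal_mul_I_im] at h
    exact neg_of_mul_neg_right h hr.le
  have hπ := Real.pi_pos
  refine ⟨by rw [hnorm]; linarith, by rw [hnorm]; linarith, ?_, ?_, ?_, ?_⟩
  · rcases le_or_gt φ (Real.pi / 2) with h | h
    · linarith [hsheet0 h]
    rcases lt_or_ge φ (3 * Real.pi / 2) with h' | h'
    exacts [(hsheet1 h h').le, (hsheet2 h').2.le]
  · intro hpos him
    have := Real.lt_pi_of_sin_pos hφ2π (him_pos him)
    rcases Real.lt_pi_div_two_or_three_pi_div_two_lt_of_cos_pos (hre hpos) with h | h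
    exacts [(hsheet0 h.le).le, by linarith]
  · intro hpos
    rcases Real.lt_pi_div_two_or_three_pi_div_two_lt_of_cos_pos (hre hpos) with h | h
    exacts [Or.inl (hsheet0 h.le).le, Or.inr (hsheet2 h.le).1.le]
  · intro hpos him
    have := Real.pi_lt_of_sin_neg hφ0 (him_neg him)
    rcases Real.lt_pi_div_two_or_three_pi_div_two_lt_of_cos_pos (hre hpos) with h | h
    exacts [by linarith, (hsheet2 h.le).1.le]

theorem closure_domD_subset : closure domD ⊆ closedSupersetD :=
  closure_minimal domD_subset_closedSupersetD isClosed_closedSupersetD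

/- Three open pieces covering `closedSupersetD`, on which `sheetLog` below uses the branches
of `log z` with argument in `(-π, π)`, `(0, 2π)` and `(π, 3π)` respectively. -/
def sheet0 : Set (ℂ × ℂ) :=
  {p | (0 < p.1.im ∨ 0 < p.1.re ∧ -(1 / 10) < p.1.im) ∧ ‖p.2‖ < 3 / 2} ∪
    {p | 1 / 4 < p.1.im ∧ p.1.re < 1 / 8}

def sheet1 : Set (ℂ × ℂ) := {p | p.1.re < 0 ∨ p.1.im < -(1 / 4)}

def sheet2 : Set (ℂ × ℂ) := {p | (p.1.im < 0 ∨ 0 < p.1.re ∧ p.1.im < 1 / 10) ∧ 3 / 2 < ‖p.2‖}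

theorem isOpen_sheet0 : IsOpen sheet0 := by
  have hre : Continuous fun p : ℂ × ℂ => p.1.re := by fun_prop
  have him : Continuous fun p : ℂ × ℂ => p.1.im := by fun_prop
  have hw : Continuous fun p : ℂ × ℂ => ‖p.2‖ := by fun_prop
  exact (((isOpen_lt continuous_const him).union ((isOpen_lt continuous_const hre).inter
    (isOpen_lt continuous_const him))).inter (isOpen_lt hw continuous_const)).union
    ((isOpen_lt continuous_const him).inter (isOpen_lt hre continuous_const))

theorem isOpen_sheet1 : IsOpen sheet1 := by
  have hre : Continuous fun p : ℂ × ℂ => p.1.re := by fun_prop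
  have him : Continuous fun p : ℂ × ℂ => p.1.im := by fun_prop
  exact (isOpen_lt hre continuous_const).union (isOpen_lt him continuous_const)

theorem isOpen_sheet2 : IsOpen sheet2 := by
  have hre : Continuous fun p : ℂ × ℂ => p.1.re := by fun_prop
  have him : Continuous fun p : ℂ × ℂ => p.1.im := by fun_prop
  have hw : Continuous fun p : ℂ × ℂ => ‖p.2‖ := by fun_prop
  exact ((isOpen_lt him continuous_const).union ((isOpen_lt continuous_const hre).inter
    (isOpen_lt him continuous_const))).inter (isOpen_lt continuous_const hw)

theorem closedSupersetD_subset_sheets : closedSupersetD ⊆ sheet0 ∪ sheet1 ∪ sheet2 := by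
  rintro ⟨z, w⟩ ⟨hz_half, -, -, hquad1, hquad14, hquad4⟩
  simp only [sheet0, sheet1, sheet2, mem_union, mem_ofPred_eq] at *
  rcases lt_trichotomy z.re 0 with hre | hre | hre
  · exact Or.inl (Or.inr (Or.inl hre))
  · have : 1 / 2 ≤ |z.im| := by
      have := Complex.norm_le_abs_re_add_abs_im z
      rw [hre, abs_zero, zero_add] at this
      linarith
    rcases le_abs'.1 this with h | h
    · exact Or.inl (Or.inr (Or.inr (by linarith)))
    · exact Or.inl (Or.inl (Or.inr ⟨by linarith, by linarith⟩))
  rcases lt_trichotomy z.im 0 with him | him | him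
  · exact Or.inr ⟨Or.inl him, by linarith [hquad4 hre him]⟩
  · rcases hquad14 hre with hw | hw
    · exact Or.inl (Or.inl (Or.inl ⟨Or.inr ⟨hre, by linarith⟩, by linarith⟩))
    · exact Or.inr ⟨Or.inr ⟨hre, by linarith⟩, by linarith⟩
  · exact Or.inl (Or.inl (Or.inl ⟨Or.inl him, by linarith [hquad1 hre him]⟩))

theorem im_pos_of_mem_sheet0_of_mem_sheet1 {p : ℂ × ℂ} (h0 : p ∈ sheet0) (h1 : p ∈ sheet1) :
    0 < p.1.im := by
  rcases h0 with ⟨h | ⟨hre, him⟩, -⟩ | ⟨him, -⟩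
  · exact h
  · rcases h1 with h | h <;> linarith
  · linarith

theorem notMem_sheet0_of_mem_sheet2 {p : ℂ × ℂ} (h2 : p ∈ sheet2) : p ∉ sheet0 := by
  rintro (⟨-, hw⟩ | ⟨him, -⟩)
  · linarith [h2.2]
  · rcases h2.1 with h | ⟨-, h⟩ <;> linarith

theorem im_neg_of_mem_sheet2_of_mem_sheet1 {p : ℂ × ℂ} (h2 : p ∈ sheet2) (h1 : p ∈ sheet1) :
    p.1.im < 0 := by
  rcases h2.1 with h | ⟨hre, -⟩
  · exact h
  · rcases h1 with h | h <;> linarith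

open scoped Classical in
def sheetLog (p : ℂ × ℂ) : ℂ :=
  if p ∈ sheet0 then log p.1
  else if p ∈ sheet1 then log (-p.1) + Real.pi * I
  else log p.1 + 2 * Real.pi * I

theorem sheetLog_of_mem_sheet0 {p : ℂ × ℂ} (h0 : p ∈ sheet0) : sheetLog p = log p.1 := by
  simp [sheetLog, h0]

theorem sheetLog_of_mem_sheet1 {p : ℂ × ℂ} (h1 : p ∈ sheet1) :
    sheetLog p = log (-p.1) + Real.pi * I := by
  by_cases h0 : p ∈ sheet0
  · rw [sheetLog_of_mem_sheet0 h0,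
      log_neg_add_pi_mul_I_of_im_pos_s2 (im_pos_of_mem_sheet0_of_mem_sheet1 h0 h1)]
  · simp [sheetLog, h0, h1]

theorem sheetLog_of_mem_sheet2 {p : ℂ × ℂ} (h2 : p ∈ sheet2) :
    sheetLog p = log p.1 + 2 * Real.pi * I := by
  by_cases h1 : p ∈ sheet1
  · rw [sheetLog_of_mem_sheet1 h1,
      log_neg_add_pi_mul_I_of_im_neg_s2 (im_neg_of_mem_sheet2_of_mem_sheet1 h2 h1)]
  · simp [sheetLog, notMem_sheet0_of_mem_sheet2 h2, h1]

theorem differentiableOn_sheetLog : DifferentiableOn ℂ sheetLog (sheet0 ∪ sheet1 ∪ sheet2) := by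
  have h0 : DifferentiableOn ℂ sheetLog sheet0 := by
    refine (differentiableOn_fst.clog fun p hp => ?_).congr fun p hp => sheetLog_of_mem_sheet0 hp
    rcases hp with ⟨h | ⟨hre, -⟩, -⟩ | ⟨him, -⟩
    exacts [Or.inr h.ne', Or.inl hre, Or.inr (by linarith : (0 : ℝ) < p.1.im).ne']
  have h1 : DifferentiableOn ℂ sheetLog sheet1 := by
    refine ((differentiableOn_fst.neg.clog fun p hp => ?_).add_const _).congr
      fun p hp => sheetLog_of_mem_sheet1 hp
    rcases hp with h | h
    exacts [Or.inl (by simpa using h), Or.inr (by simp; linarith)]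
  have h2 : DifferentiableOn ℂ sheetLog sheet2 := by
    refine ((differentiableOn_fst.clog fun p hp => ?_).add_const _).congr
      fun p hp => sheetLog_of_mem_sheet2 hp
    rcases hp.1 with h | ⟨hre, -⟩
    exacts [Or.inr h.ne, Or.inl hre]
  exact (h0.union_of_isOpen h1 isOpen_sheet0 isOpen_sheet1).union_of_isOpen h2
    (isOpen_sheet0.union isOpen_sheet1) isOpen_sheet2

theorem sheetLog_re (p : ℂ × ℂ) : (sheetLog p).re = Real.log ‖p.1‖ := by
  unfold sheetLog
  split_ifs <;> simp [log_re]

theorem im_nonneg_of_mem_sheet0 {p : ℂ × ℂ} (hp : p ∈ closedSupersetD) (h0 : p ∈ sheet0) :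
    0 ≤ p.1.im := by
  obtain ⟨-, -, -, -, -, hquad4⟩ := hp
  rcases h0 with ⟨h | ⟨hre, -⟩, hw⟩ | ⟨him, -⟩
  · exact h.le
  · by_contra! him
    linarith [hquad4 hre him]
  · linarith

theorem arg_nonpos_of_mem_sheet2 {p : ℂ × ℂ} (hp : p ∈ closedSupersetD) (h2 : p ∈ sheet2) :
    arg p.1 ≤ 0 := by
  obtain ⟨-, -, -, hquad1, -, -⟩ := hp
  rcases h2 with ⟨h | ⟨hre, -⟩, hw⟩
  · exact (arg_neg_iff.2 h).le
  · rcases lt_or_ge 0 p.1.im with him | him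
    · linarith [hquad1 hre him]
    rcases him.lt_or_eq with him | him
    exacts [(arg_neg_iff.2 him).le, (arg_eq_zero_iff.2 ⟨hre.le, him⟩).le]

theorem sheetLog_im_mem_Icc {p : ℂ × ℂ} (hp : p ∈ closedSupersetD) :
    (sheetLog p).im ∈ Icc 0 (2 * Real.pi) := by
  have hπ := Real.pi_pos
  rcases closedSupersetD_subset_sheets hp with (h0 | h1) | h2
  · rw [sheetLog_of_mem_sheet0 h0, log_im]
    exact ⟨arg_nonneg_iff.2 (im_nonneg_of_mem_sheet0 hp h0), by linarith [arg_le_pi p.1]⟩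
  · simp only [sheetLog_of_mem_sheet1 h1, add_im, log_im, mul_im, ofReal_re, ofReal_im, I_re,
      I_im]
    constructor <;> linarith [neg_pi_lt_arg (-p.1), arg_le_pi (-p.1)]
  · simp only [sheetLog_of_mem_sheet2 h2, add_im, log_im, mul_im, ofReal_re, ofReal_im, I_re,
      I_im]
    constructor <;> norm_num <;> linarith [neg_pi_lt_arg p.1, arg_nonpos_of_mem_sheet2 hp h2]

theorem eq_norm_and_norm_le_one_of_sheetLog_im_eq_zero {p : ℂ × ℂ}
    (hp : p ∈ closedSupersetD) (h : (sheetLog p).im = 0) : p.1 = ‖p.1‖ ∧ ‖p.2‖ ≤ 1 := by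
  have hπ := Real.pi_pos
  have hsheets := closedSupersetD_subset_sheets hp
  obtain ⟨hz_half, -, -, -, hquad14, -⟩ := hp
  rcases hsheets with (h0 | h1) | h2
  · rw [sheetLog_of_mem_sheet0 h0, log_im] at h
    obtain ⟨hre, him⟩ := arg_eq_zero_iff.1 h
    refine ⟨by simpa [h] using (norm_mul_exp_arg_mul_I p.1).symm, ?_⟩
    have hre : 0 < p.1.re := by
      have := Complex.norm_le_abs_re_add_abs_im p.1
      rw [him, abs_zero, add_zero, abs_of_nonneg hre] at this
      linarith
    rcases h0 with ⟨-, hw⟩ | ⟨him', -⟩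
    · rcases hquad14 hre with hw' | hw'
      exacts [hw', by linarith]
    · linarith
  · simp only [sheetLog_of_mem_sheet1 h1, add_im, log_im, mul_im, ofReal_re, ofReal_im, I_re,
      I_im] at h
    linarith [neg_pi_lt_arg (-p.1)]
  · simp only [sheetLog_of_mem_sheet2 h2, add_im, log_im, mul_im, ofReal_re, ofReal_im, I_re,
      I_im] at h
    norm_num at h
    linarith [neg_pi_lt_arg p.1]

theorem sheetLog_ne_log {a : ℝ} (ha : 0 < a) {p : ℂ × ℂ} (hp : p ∈ closedSupersetD)
    (hpa : ¬(p.1 = a ∧ ‖p.2‖ ≤ 1)) : sheetLog p ≠ Real.log a := by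
  intro h
  obtain ⟨hz, hw⟩ := eq_norm_and_norm_le_one_of_sheetLog_im_eq_zero hp (by simp [h])
  have hlog : Real.log ‖p.1‖ = Real.log a := by rw [← sheetLog_re, h, ofReal_re]
  have hnorm : ‖p.1‖ = a :=
    Real.log_injOn_pos (mem_Ioi.2 (by linarith [hp.1])) (mem_Ioi.2 ha) hlog
  exact hpa ⟨hz.trans (by rw [hnorm]), hw⟩

theorem sheetLog_ofReal {a : ℝ} (ha : 0 < a) {w : ℂ} (hw : ‖w‖ ≤ 1) :
    sheetLog (a, w) = Real.log a := by
  have h0 : ((a : ℂ), w) ∈ sheet0 := Or.inl ⟨Or.inr ⟨by simpa using ha, by norm_num⟩, by linarith⟩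
  rw [sheetLog_of_mem_sheet0 h0, ofReal_log ha.le]

def peakExponent (μ : ℂ) : ℂ := I * μ - μ ^ 2 / 16

theorem differentiable_peakExponent : Differentiable ℂ peakExponent := by
  unfold peakExponent
  fun_prop

theorem norm_exp_peakExponent_lt_one {μ : ℂ} (h0 : 0 ≤ μ.im) (h16 : μ.im < 16) (hμ : μ ≠ 0) :
    ‖exp (peakExponent μ)‖ < 1 := by
  have hre : (peakExponent μ).re = -μ.re ^ 2 / 16 - μ.im * (16 - μ.im) / 16 := by
    simp [peakExponent, pow_two]
    ring
  rw [norm_exp, Real.exp_lt_one_iff, hre]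
  rcases eq_or_ne μ.re 0 with hx | hx
  · have hy : 0 < μ.im := h0.lt_of_ne' fun hy => hμ (Complex.ext hx hy)
    nlinarith
  · have := pow_pos (abs_pos.2 hx) 2
    rw [sq_abs] at this
    nlinarith

end HartogsPeak

open HartogsPeak

theorem stmt2 (a : ℝ) (ha : a ∈ Icc (1 / 2 : ℝ) 1) :
    ∃ (g : ℂ × ℂ → ℂ) (U : Set (ℂ × ℂ)), IsOpen U ∧ closure domD ⊆ U ∧
      DifferentiableOn ℂ g U ∧
      (∀ w : ℂ, ‖w‖ ≤ 1 → g ((a : ℂ), w) = 1) ∧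
      (∀ p ∈ closure domD, ¬(p.1 = (a : ℂ) ∧ ‖p.2‖ ≤ 1) → ‖g p‖ < 1) := by
  have ha0 : 0 < a := by linarith [ha.1]
  refine ⟨fun p => exp (peakExponent (sheetLog p - Real.log a)), sheet0 ∪ sheet1 ∪ sheet2,
    (isOpen_sheet0.union isOpen_sheet1).union isOpen_sheet2,
    closure_domD_subset.trans closedSupersetD_subset_sheets,
    (differentiable_peakExponent.comp_differentiableOn
      (differentiableOn_sheetLog.sub_const _)).cexp, fun w hw => ?_, fun p hp hpa => ?_⟩
  · simp [sheetLog_ofReal ha0 hw, peakExponent]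
  · have hpE := closure_domD_subset hp
    have him := sheetLog_im_mem_Icc hpE
    refine norm_exp_peakExponent_lt_one ?_ ?_ (sub_ne_zero.2 (sheetLog_ne_log ha0 hpE hpa))
    · simpa using him.1
    · simp only [sub_im, ofReal_im, sub_zero]
      linarith [him.2, Real.pi_lt_four]
end
end

section
/- There exists a function h holomorphic on an open neighborhood of cl D such that h(x, w) = exp(i·log x) for all x ∈ I = [1/2, 1] and |w| ≤ 1, h(x, w) = exp(−2π + i·log x) for all x ∈ I and 2 ≤ |w| ≤ 3, and |h(z, w)| < 1 for every (z, w) ∈ cl D with z ∉ I (here log x is the real logarithm, so |h| = 1 on I × cl 𝔻 and |h| = e^{−2π} < 1 on I × cl A(2,3)). -/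
/-!
Take `h = exp (i L(z))` for a branch `L` of `log z`, so that `|h| = exp (-Im L)`. The branch is
chosen on two open "sheets" of `ℂ × ℂ`: near `I × cl 𝔻` and going counterclockwise through
`arg z ∈ (-π/4, 5π/4)` we use the branch with `Im L ∈ (-3π/4, 5π/4]`, equal to `log x` on `I`;
near `I × cl A(2,3)` and going clockwise through `arg z ∈ (3π/4, 9π/4)` we use the branch with
`Im L ∈ (3π/4, 11π/4]`, equal to `log x + 2πi` on `I`. The two agree where the sheets meet, around
the negative real axis, and the sheets are kept apart over the positive reals by the condition on
`‖w‖`, which is possible because there `cl D` only contains `‖w‖ ≤ 1` and `2 ≤ ‖w‖`. Following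
`cl D` once around `z = 0` the imaginary part of `L` runs from `0` to `2π`, so it is positive
off `I`.
-/

open Set Complex

noncomputable section

open scoped Real

namespace Complex

/-- The branch of the logarithm whose imaginary part lies in `(θ - π, θ + π]`. -/
def logBranch (θ : ℝ) (z : ℂ) : ℂ := log (z * exp (-(θ * I))) + θ * I

theorem exp_logBranch (θ : ℝ) {z : ℂ} (hz : z ≠ 0) : exp (logBranch θ z) = z := by
  rw [logBranch, exp_add, exp_log (mul_ne_zero hz (exp_ne_zero _)), mul_assoc, ← exp_add,
    neg_add_cancel, exp_zero, mul_one]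

theorem logBranch_im (θ : ℝ) (z : ℂ) :
    (logBranch θ z).im = arg (z * exp (-(θ * I))) + θ := by
  simp [logBranch, log_im]

theorem logBranch_eq_of_exp_eq {θ : ℝ} {a z : ℂ} (ha : exp a = z) (h₁ : θ - π < a.im)
    (h₂ : a.im ≤ θ + π) : logBranch θ z = a := by
  rw [logBranch, ← ha, ← exp_add, log_exp] <;> simp <;> linarith

theorem differentiableAt_logBranch (θ : ℝ) {z : ℂ} (hz : z * exp (-(θ * I)) ∈ slitPlane) :
    DifferentiableAt ℂ (logBranch θ) z :=
  ((differentiableAt_id.mul_const _).clog hz).add_const _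

theorem re_mul_exp_neg_mul_I (z : ℂ) (θ : ℝ) :
    (z * exp (-(θ * I))).re = z.re * Real.cos θ + z.im * Real.sin θ := by
  simp [mul_re, exp_re, exp_im]

theorem im_mul_exp_neg_mul_I (z : ℂ) (θ : ℝ) :
    (z * exp (-(θ * I))).im = z.im * Real.cos θ - z.re * Real.sin θ := by
  simp [mul_im, exp_re, exp_im]
  ring

theorem norm_exp_I_mul (a : ℂ) : ‖exp (I * a)‖ = Real.exp (-a.im) := by
  simp [norm_exp]

end Complex

theorem DifferentiableOn.piecewise_union {𝕜 E F : Type*} [NontriviallyNormedField 𝕜]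
    [NormedAddCommGroup E] [NormedSpace 𝕜 E] [NormedAddCommGroup F] [NormedSpace 𝕜 F]
    {f g : E → F} {U V : Set E} [∀ x, Decidable (x ∈ U)] (hU : IsOpen U) (hV : IsOpen V)
    (hf : DifferentiableOn 𝕜 f U) (hg : DifferentiableOn 𝕜 g V) (hfg : EqOn f g (U ∩ V)) :
    DifferentiableOn 𝕜 (U.piecewise f g) (U ∪ V) := by
  have hgV : EqOn (U.piecewise f g) g V := fun x hx => by
    by_cases hxU : x ∈ U
    · rw [piecewise_eq_of_mem U f g hxU, hfg ⟨hxU, hx⟩]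
    · rw [piecewise_eq_of_notMem U f g hxU]
  rintro x (hx | hx)
  · exact ((hf.differentiableAt (hU.mem_nhds hx)).congr_of_eventuallyEq
      (Filter.eventuallyEq_of_mem (hU.mem_nhds hx) (U.piecewise_eqOn f g))).differentiableWithinAt
  · exact ((hg.differentiableAt (hV.mem_nhds hx)).congr_of_eventuallyEq
      (Filter.eventuallyEq_of_mem (hV.mem_nhds hx) hgV)).differentiableWithinAt

/-- A closed superset of `domD`. Over the positive reals it omits `1 < ‖w‖ < 2`, which is what
lets the two sheets below cover it. -/
def domDHull : Set (ℂ × ℂ) :=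
  {p | 1 / 2 ≤ ‖p.1‖ ∧ ‖p.1‖ ≤ 1 ∧
    (p.1.re ≤ 0 ∨ (0 ≤ p.1.im ∧ ‖p.2‖ ≤ 1) ∨ (p.1.im ≤ 0 ∧ 2 ≤ ‖p.2‖))}

theorem isClosed_domDHull : IsClosed domDHull := by
  simp only [domDHull, ofPred_and, ofPred_or]
  apply_rules [IsClosed.inter, IsClosed.union, isClosed_le] <;> fun_prop

theorem domD_subset_domDHull : domD ⊆ domDHull := by
  rintro ⟨_, w⟩ ⟨r, φ, hr₁, hr₂, hφ₀, hφ₁, rfl, hw₁, hw₂, hw₃⟩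
  have hnorm : ‖(r : ℂ) * exp (φ * I)‖ = r := by
    rw [norm_mul, norm_exp_ofReal_mul_I, mul_one, norm_real, Real.norm_of_nonneg (by linarith)]
  refine ⟨by rw [hnorm]; linarith, by rw [hnorm]; linarith, ?_⟩
  simp only [re_ofReal_mul, im_ofReal_mul, exp_ofReal_mul_I_re, exp_ofReal_mul_I_im]
  rcases le_or_gt φ (π / 2) with h | h
  · exact Or.inr (Or.inl ⟨mul_nonneg (by linarith)
      (Real.sin_nonneg_of_nonneg_of_le_pi hφ₀.le (by linarith)), (hw₁ h).le⟩)
  rcases lt_or_ge φ (3 * π / 2) with h' | h'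
  · exact Or.inl (mul_nonpos_of_nonneg_of_nonpos (by linarith)
      (Real.cos_nonpos_of_pi_div_two_le_of_le h.le (by linarith)))
  · refine Or.inr (Or.inr ⟨mul_nonpos_of_nonneg_of_nonpos (by linarith) ?_, (hw₃ h').1.le⟩)
    rw [← Real.sin_sub_two_pi]
    exact Real.sin_nonpos_of_nonpos_of_neg_pi_le (by linarith) (by linarith)

def diskSheet : Set (ℂ × ℂ) :=
  {p | 0 < p.1.re + p.1.im ∧ ‖p.2‖ < 3 / 2} ∪ {p | p.1.re < p.1.im}

def annulusSheet : Set (ℂ × ℂ) :=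
  {p | p.1.re + p.1.im < 0} ∪ {p | p.1.im < p.1.re ∧ 3 / 2 < ‖p.2‖}

theorem isOpen_diskSheet : IsOpen diskSheet := by
  simp only [diskSheet, ofPred_and]
  apply_rules [IsOpen.inter, IsOpen.union, isOpen_lt] <;> fun_prop

theorem isOpen_annulusSheet : IsOpen annulusSheet := by
  simp only [annulusSheet, ofPred_and]
  apply_rules [IsOpen.inter, IsOpen.union, isOpen_lt] <;> fun_prop

theorem domDHull_subset_sheets : domDHull ⊆ diskSheet ∪ annulusSheet := by
  rintro ⟨z, w⟩ ⟨hz, -, hcase⟩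
  have hz0 : z ≠ 0 := by
    rintro rfl
    norm_num at hz
  simp only [diskSheet, annulusSheet, mem_union, mem_ofPred_eq]
  by_cases hlt : z.re < z.im
  · exact Or.inl (Or.inr hlt)
  by_cases hneg : z.re + z.im < 0
  · exact Or.inr (Or.inl hneg)
  have hre : 0 < z.re := by
    by_contra! h
    exact hz0 (Complex.ext (by simp; linarith) (by simp; linarith))
  rcases hcase with h | ⟨him, hw⟩ | ⟨him, hw⟩
  · linarith
  · exact Or.inl (Or.inl ⟨by linarith, by linarith⟩)
  · exact Or.inr (Or.inr ⟨by linarith, by linarith⟩)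

theorem re_mul_exp_neg_pi_div_four (z : ℂ) :
    (z * exp (-((π / 4 : ℝ) * I))).re = √2 / 2 * (z.re + z.im) := by
  rw [re_mul_exp_neg_mul_I, Real.cos_pi_div_four, Real.sin_pi_div_four]; ring

theorem im_mul_exp_neg_pi_div_four (z : ℂ) :
    (z * exp (-((π / 4 : ℝ) * I))).im = √2 / 2 * (z.im - z.re) := by
  rw [im_mul_exp_neg_mul_I, Real.cos_pi_div_four, Real.sin_pi_div_four]; ring

theorem re_mul_exp_neg_seven_pi_div_four (z : ℂ) :
    (z * exp (-((7 * π / 4 : ℝ) * I))).re = √2 / 2 * (z.re - z.im) := by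
  rw [re_mul_exp_neg_mul_I, show 7 * π / 4 = -(π / 4) + 2 * π by ring, Real.cos_add_two_pi,
    Real.sin_add_two_pi, Real.cos_neg, Real.sin_neg, Real.cos_pi_div_four, Real.sin_pi_div_four]
  ring

theorem im_mul_exp_neg_seven_pi_div_four (z : ℂ) :
    (z * exp (-((7 * π / 4 : ℝ) * I))).im = √2 / 2 * (z.re + z.im) := by
  rw [im_mul_exp_neg_mul_I, show 7 * π / 4 = -(π / 4) + 2 * π by ring, Real.cos_add_two_pi,
    Real.sin_add_two_pi, Real.cos_neg, Real.sin_neg, Real.cos_pi_div_four, Real.sin_pi_div_four]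
  ring

theorem differentiableOn_diskSheet :
    DifferentiableOn ℂ (fun p : ℂ × ℂ => exp (I * logBranch (π / 4) p.1)) diskSheet := by
  intro p hp
  refine (((differentiableAt_logBranch _ ?_).comp p differentiableAt_fst).const_mul I).cexp
    |>.differentiableWithinAt
  have h2 : (0 : ℝ) < √2 / 2 := by positivity
  rw [mem_slitPlane_iff, re_mul_exp_neg_pi_div_four, im_mul_exp_neg_pi_div_four]
  rcases hp with ⟨hp, -⟩ | hp
  · exact Or.inl (mul_pos h2 hp)
  · exact Or.inr (mul_pos h2 (sub_pos.2 hp)).ne'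

theorem differentiableOn_annulusSheet :
    DifferentiableOn ℂ (fun p : ℂ × ℂ => exp (I * logBranch (7 * π / 4) p.1)) annulusSheet := by
  intro p hp
  refine (((differentiableAt_logBranch _ ?_).comp p differentiableAt_fst).const_mul I).cexp
    |>.differentiableWithinAt
  have h2 : (0 : ℝ) < √2 / 2 := by positivity
  rw [mem_slitPlane_iff, re_mul_exp_neg_seven_pi_div_four, im_mul_exp_neg_seven_pi_div_four]
  rcases hp with hp | ⟨hp, -⟩
  · exact Or.inr (mul_neg_of_pos_of_neg h2 hp).ne
  · exact Or.inl (mul_pos h2 (sub_pos.2 hp))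

-- On the overlap of the sheets `arg z ∈ (3π/4, 5π/4)`, which lies in both windows.
theorem logBranch_seven_pi_div_four_eq {z : ℂ} (h₁ : z.re < z.im) (h₂ : z.re + z.im < 0) :
    logBranch (7 * π / 4) z = logBranch (π / 4) z := by
  have hz : z ≠ 0 := fun h => by simp [h] at h₂
  set u := z * exp (-((π / 4 : ℝ) * I))
  have h2 : (0 : ℝ) < √2 / 2 := by positivity
  have hre : u.re < 0 := by
    rw [re_mul_exp_neg_pi_div_four]; exact mul_neg_of_pos_of_neg h2 h₂
  have him : 0 ≤ u.im := by
    rw [im_mul_exp_neg_pi_div_four]; exact (mul_pos h2 (sub_pos.2 h₁)).le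
  have harg : π / 2 < arg u := by
    have := abs_arg_le_pi_div_two_iff.not.2 hre.not_ge
    rw [abs_of_nonneg (arg_nonneg_iff.2 him)] at this
    linarith
  refine logBranch_eq_of_exp_eq (exp_logBranch _ hz) ?_ ?_ <;> rw [logBranch_im]
  · linarith
  · linarith [arg_le_pi u]

open Classical in
def hartogsFun : ℂ × ℂ → ℂ :=
  diskSheet.piecewise (fun p => exp (I * logBranch (π / 4) p.1))
    (fun p => exp (I * logBranch (7 * π / 4) p.1))

open Classical in
theorem differentiableOn_hartogsFun :
    DifferentiableOn ℂ hartogsFun (diskSheet ∪ annulusSheet) := by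
  refine differentiableOn_diskSheet.piecewise_union isOpen_diskSheet isOpen_annulusSheet
    differentiableOn_annulusSheet ?_
  rintro p ⟨⟨hp, hw⟩ | (hp : p.1.re < p.1.im), (hq : p.1.re + p.1.im < 0) | ⟨hq, hw'⟩⟩
  · linarith
  · linarith
  · simp only [logBranch_seven_pi_div_four_eq hp hq]
  · linarith

theorem logBranch_ofReal {θ x : ℝ} (hx : 0 < x) (k : ℤ) (h₁ : θ - π < 2 * π * k)
    (h₂ : 2 * π * k ≤ θ + π) :
    logBranch θ x = Real.log x + 2 * π * k * I := by
  refine logBranch_eq_of_exp_eq ?_ (by simpa using h₁) (by simpa using h₂)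
  rw [exp_add, ← ofReal_exp, Real.exp_log hx, mul_comm (2 * π : ℂ), mul_assoc,
    exp_int_mul_two_pi_mul_I, mul_one]

theorem hartogsFun_of_norm_le_one {x : ℝ} (hx : 0 < x) {w : ℂ} (hw : ‖w‖ ≤ 1) :
    hartogsFun (x, w) = exp (I * Real.log x) := by
  have hD : ((x : ℂ), w) ∈ diskSheet := Or.inl ⟨by simpa using hx, by linarith⟩
  rw [hartogsFun, Set.piecewise, if_pos hD,
    logBranch_ofReal hx 0 (by rw [Int.cast_zero]; linarith [Real.pi_pos])
      (by rw [Int.cast_zero]; linarith [Real.pi_pos])]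
  simp

theorem hartogsFun_of_two_le_norm {x : ℝ} (hx : 0 < x) {w : ℂ} (hw : 2 ≤ ‖w‖) :
    hartogsFun (x, w) = exp ((-(2 * π) : ℝ) + I * Real.log x) := by
  have hD : ((x : ℂ), w) ∉ diskSheet := by
    rintro (⟨-, hw' : ‖w‖ < 3 / 2⟩ | (h : (x : ℂ).re < (x : ℂ).im))
    · linarith
    · rw [ofReal_re, ofReal_im] at h
      linarith
  rw [hartogsFun, Set.piecewise, if_neg hD,
    logBranch_ofReal hx 1 (by rw [Int.cast_one]; linarith [Real.pi_pos])
      (by rw [Int.cast_one]; linarith [Real.pi_pos])]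
  congr 1
  push_cast
  linear_combination (2 * π : ℂ) * I_mul_I

theorem exists_mem_Icc_of_arg_eq_zero {z : ℂ} (hz₁ : 1 / 2 ≤ ‖z‖) (hz₂ : ‖z‖ ≤ 1)
    (harg : arg z = 0) :
    ∃ x : ℝ, x ∈ Icc (1 / 2 : ℝ) 1 ∧ z = x := by
  obtain ⟨hre, him⟩ := arg_eq_zero_iff.1 harg
  have hz : z = z.re := Complex.ext rfl (by simpa using him)
  rw [hz, norm_real, Real.norm_of_nonneg hre] at hz₁ hz₂
  exact ⟨z.re, ⟨hz₁, hz₂⟩, hz⟩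

theorem norm_hartogsFun_lt_one {p : ℂ × ℂ} (hp : p ∈ domDHull)
    (hI : ¬ ∃ x : ℝ, x ∈ Icc (1 / 2 : ℝ) 1 ∧ p.1 = x) : ‖hartogsFun p‖ < 1 := by
  obtain ⟨z, w⟩ := p
  obtain ⟨hz₁, hz₂, hcase⟩ := hp
  simp only at hz₁ hz₂ hcase hI
  rw [hartogsFun, Set.piecewise]
  split_ifs with hD
  · rw [norm_exp_I_mul, Real.exp_lt_one_iff, neg_lt_zero]
    rcases hD with ⟨hpos, hw⟩ | (hlt : z.re < z.im)
    · have him : 0 ≤ z.im := by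
        rcases hcase with h | ⟨h, -⟩ | ⟨-, h⟩ <;> linarith
      have hz : z ≠ 0 := fun h => by simp [h] at hpos
      have harg : 0 ≤ arg z := arg_nonneg_iff.2 him
      rw [logBranch_eq_of_exp_eq (exp_log hz) (by rw [log_im]; linarith [Real.pi_pos])
        (by rw [log_im]; linarith [arg_le_pi z, Real.pi_pos]), log_im]
      exact harg.lt_of_ne' fun h => hI (exists_mem_Icc_of_arg_eq_zero hz₁ hz₂ h)
    · have him : 0 ≤ (z * exp (-((π / 4 : ℝ) * I))).im := by
        rw [im_mul_exp_neg_pi_div_four]; exact mul_nonneg (by positivity) (by linarith)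
      rw [logBranch_im]
      linarith [arg_nonneg_iff.2 him, Real.pi_pos]
  · rw [norm_exp_I_mul, Real.exp_lt_one_iff, neg_lt_zero, logBranch_im]
    linarith [neg_pi_lt_arg (z * exp (-((7 * π / 4 : ℝ) * I))), Real.pi_pos]

theorem stmt4 :
    ∃ (h : ℂ × ℂ → ℂ) (U : Set (ℂ × ℂ)), IsOpen U ∧ closure domD ⊆ U ∧
      DifferentiableOn ℂ h U ∧
      (∀ x ∈ Icc (1 / 2 : ℝ) 1, ∀ w : ℂ, ‖w‖ ≤ 1 →
        h ((x : ℂ), w) = Complex.exp (Complex.I * (Real.log x : ℂ))) ∧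
      (∀ x ∈ Icc (1 / 2 : ℝ) 1, ∀ w : ℂ, 2 ≤ ‖w‖ → ‖w‖ ≤ 3 →
        h ((x : ℂ), w) = Complex.exp ((-(2 * Real.pi) : ℝ) + Complex.I * (Real.log x : ℂ))) ∧
      (∀ p ∈ closure domD, (¬ ∃ x : ℝ, x ∈ Icc (1 / 2 : ℝ) 1 ∧ p.1 = (x : ℂ)) →
        ‖h p‖ < 1) := by
  have hclosure : closure domD ⊆ domDHull :=
    closure_minimal domD_subset_domDHull isClosed_domDHull
  refine ⟨hartogsFun, diskSheet ∪ annulusSheet, isOpen_diskSheet.union isOpen_annulusSheet,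
    hclosure.trans domDHull_subset_sheets, differentiableOn_hartogsFun, ?_, ?_, ?_⟩
  · exact fun x hx w hw => hartogsFun_of_norm_le_one (by linarith [hx.1]) hw
  · exact fun x hx w hw _ => hartogsFun_of_two_le_norm (by linarith [hx.1]) hw
  · exact fun p hp hI => norm_hartogsFun_lt_one (hclosure hp) hI
end
end

section
/- There exists a function h holomorphic on an open neighborhood of cl D such that for every a ∈ I = [1/2, 1] there is no function F holomorphic on 𝔻(3) = {w ∈ ℂ : |w| < 3} with F(w) = h(a, w) for all w with |w| < 1 and F(w) = h(a, w) for all w with 2 < |w| < 3. (In particular, functions extending holomorphically past cl D need not extend to the envelope of holomorphy of D as continuous functions.) -/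
open Set Complex

noncomputable section

/-!
Take for `h` a logarithm of `z` whose branch depends on `w`: for `|w| < 3/2` the branch cut along
`arg z = -π/4`, for `|w| > 3/2` the one cut along `arg z = π/4`. The two branches agree on the
sector `π/4 < arg z < 7π/4`, which contains the part of `cl D` whose fibre is the disc of
radius 3, so `h` is holomorphic near `cl D`. Over a point `a > 0` they differ by `2πi`, so
`h(a, ·)` takes one constant value on `|w| < 1` and another on `2 < |w| < 3`; by the identity
theorem no holomorphic function on `|w| < 3` does that.
-/

open scoped Real
open Metric

theorem DifferentiableOn.piecewise_of_eqOn {𝕜 E F : Type*} [NontriviallyNormedField 𝕜]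
    [NormedAddCommGroup E] [NormedSpace 𝕜 E] [NormedAddCommGroup F] [NormedSpace 𝕜 F]
    {f g : E → F} {s A B W : Set E} [∀ x, Decidable (x ∈ s)]
    (hf : DifferentiableOn 𝕜 f (A ∪ W)) (hg : DifferentiableOn 𝕜 g B)
    (hA : IsOpen A) (hB : IsOpen B) (hW : IsOpen W) (hAs : A ⊆ s) (hBs : B ⊆ sᶜ)
    (hfg : EqOn f g W) :
    DifferentiableOn 𝕜 (s.piecewise f g) (A ∪ B ∪ W) := by
  have hfA : DifferentiableOn 𝕜 (s.piecewise f g) A :=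
    (hf.mono subset_union_left).congr fun x hx => piecewise_eq_of_mem _ _ _ (hAs hx)
  have hgB : DifferentiableOn 𝕜 (s.piecewise f g) B :=
    hg.congr fun x hx => piecewise_eq_of_notMem _ _ _ (hBs hx)
  have hfW : DifferentiableOn 𝕜 (s.piecewise f g) W := by
    refine (hf.mono subset_union_right).congr fun x hx => ?_
    by_cases hxs : x ∈ s
    · exact piecewise_eq_of_mem _ _ _ hxs
    · rw [piecewise_eq_of_notMem _ _ _ hxs, hfg hx]
  rintro x ((hx | hx) | hx)
  · exact (hfA.differentiableAt (hA.mem_nhds hx)).differentiableWithinAt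
  · exact (hgB.differentiableAt (hB.mem_nhds hx)).differentiableWithinAt
  · exact (hfW.differentiableAt (hW.mem_nhds hx)).differentiableWithinAt

lemma log_I_mul_of_arg_le {v : ℂ} (hv : v ≠ 0) (h : v.arg ≤ π / 2) :
    log (I * v) = log v + π / 2 * I := by
  rw [log_mul I_ne_zero hv (by rw [arg_I]; constructor <;> linarith [neg_pi_lt_arg v]), log_I,
    add_comm]

lemma log_I_mul_ne {v : ℂ} (hre : v.re < 0) (him : 0 ≤ v.im) :
    log (I * v) ≠ log v + π / 2 * I := by
  intro h
  have hneg : arg (I * v) < 0 := arg_neg_iff.2 (by simpa using hre)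
  have hnonneg : 0 ≤ arg v := arg_nonneg_iff.2 him
  have := congrArg im h
  simp only [log_im, add_im, mul_im, I_re, I_im, mul_one, mul_zero, add_zero] at this
  norm_num at this
  linarith [Real.pi_pos]

lemma eqOn_log_I_mul : EqOn (fun v => log (I * v)) (fun v => log v + π / 2 * I)
    {v | 0 < v.re ∨ v.im < 0} := fun v hv =>
  log_I_mul_of_arg_le (by rintro rfl; simp at hv) (arg_le_pi_div_two_iff.2 (hv.imp le_of_lt id))

lemma I_mul_mem_slitPlane {v : ℂ} (hv : 0 < v.re ∨ v.im < 0) : I * v ∈ slitPlane := by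
  rw [mem_slitPlane_iff]
  simp only [mul_re, mul_im, I_re, I_im, zero_mul, one_mul, zero_sub, zero_add]
  rcases hv with h | h
  · exact .inr h.ne'
  · exact .inl (by linarith)

theorem DifferentiableOn.eqOn_ball_of_eqOn_ball {E : Type*} [NormedAddCommGroup E]
    [NormedSpace ℂ E] [CompleteSpace E] {F : ℂ → E} {c : E} {x : ℂ} {r R : ℝ}
    (hF : DifferentiableOn ℂ F (ball x R)) (hr : 0 < r) (hc : EqOn F (fun _ => c) (ball x r)) :
    EqOn F (fun _ => c) (ball x R) := by
  intro w hw
  exact (hF.analyticOnNhd isOpen_ball).eqOn_of_preconnected_of_eventuallyEq analyticOnNhd_const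
    (convex_ball x R).isPreconnected (mem_ball_self (pos_of_mem_ball hw))
    (Filter.eventuallyEq_of_mem (ball_mem_nhds x hr) hc) hw

-- With `v = (I - 1) * z`, i.e. `arg v = arg z + 3π/4`, both branches are `log z` up to the same
-- additive constant; the cut of `log (I * v)` is `arg z = -π/4`, that of `log v` is `arg z = π/4`.
def hartogsLog : ℂ × ℂ → ℂ :=
  {p | ‖p.2‖ < 3 / 2}.piecewise (fun p => log (I * ((I - 1) * p.1)))
    (fun p => log ((I - 1) * p.1) + π / 2 * I)

lemma hartogsLog_of_norm_lt {z w : ℂ} (hw : ‖w‖ < 3 / 2) :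
    hartogsLog (z, w) = log (I * ((I - 1) * z)) :=
  piecewise_eq_of_mem _ _ _ hw

lemma hartogsLog_of_le_norm {z w : ℂ} (hw : 3 / 2 ≤ ‖w‖) :
    hartogsLog (z, w) = log ((I - 1) * z) + π / 2 * I :=
  piecewise_eq_of_notMem _ _ _ hw.not_gt

def hartogsLogDomain : Set (ℂ × ℂ) :=
  {z | I * ((I - 1) * z) ∈ slitPlane} ×ˢ ball 0 (3 / 2) ∪
    {z | (I - 1) * z ∈ slitPlane} ×ˢ {w | 3 / 2 < ‖w‖} ∪
    {z | 0 < ((I - 1) * z).re ∨ ((I - 1) * z).im < 0} ×ˢ univ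

def domDCover : Set (ℂ × ℂ) :=
  {z | 1 / 2 ≤ ‖z‖ ∧ 0 ≤ z.re ∧ 0 ≤ z.im} ×ˢ closedBall 0 1 ∪
    {z | 1 / 2 ≤ ‖z‖ ∧ 0 ≤ z.re ∧ z.im ≤ 0} ×ˢ {w | 2 ≤ ‖w‖} ∪
    {z | 1 / 2 ≤ ‖z‖ ∧ z.re ≤ 0} ×ˢ univ

lemma isClosed_domDCover : IsClosed domDCover := by
  have hn : IsClosed {z : ℂ | 1 / 2 ≤ ‖z‖} := isClosed_le continuous_const continuous_norm
  have hre₀ : IsClosed {z : ℂ | 0 ≤ z.re} := isClosed_le continuous_const continuous_re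
  have hre₁ : IsClosed {z : ℂ | z.re ≤ 0} := isClosed_le continuous_re continuous_const
  have him₀ : IsClosed {z : ℂ | 0 ≤ z.im} := isClosed_le continuous_const continuous_im
  have him₁ : IsClosed {z : ℂ | z.im ≤ 0} := isClosed_le continuous_im continuous_const
  exact ((hn.and (hre₀.and him₀)).prod isClosed_closedBall).union
    ((hn.and (hre₀.and him₁)).prod (isClosed_le continuous_const continuous_norm))
    |>.union ((hn.and hre₁).prod isClosed_univ)

lemma domDCover_subset : domDCover ⊆ hartogsLogDomain := by
  refine union_subset_union (union_subset_union (prod_mono ?_ (closedBall_subset_ball (by norm_num)))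
    (prod_mono ?_ fun w (hw : 2 ≤ ‖w‖) => show 3 / 2 < ‖w‖ by linarith)) (prod_mono ?_ subset_rfl)
  all_goals
    rintro z ⟨hn, hz⟩
    have hnorm := norm_le_abs_re_add_abs_im z
    simp only [mem_ofPred_eq, mem_slitPlane_iff, mul_re, mul_im, sub_re, sub_im, I_re, I_im,
      one_re, one_im] at hz ⊢
  · rw [abs_of_nonneg hz.1, abs_of_nonneg hz.2] at hnorm
    right; intro h; linarith
  · rw [abs_of_nonneg hz.1, abs_of_nonpos hz.2] at hnorm
    right; intro h; linarith
  · rcases lt_or_ge 0 z.im with him | him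
    · right; linarith
    · rw [abs_of_nonpos hz, abs_of_nonpos him] at hnorm
      left; linarith

lemma domD_subset_domDCover : domD ⊆ domDCover := by
  rintro ⟨_, w⟩ ⟨r, φ, hr₁, -, hφ₀, hφ₁, rfl, hw₁, -, hw₃⟩
  have hr : 0 < r := by linarith
  have hn : 1 / 2 ≤ ‖(r : ℂ) * exp (φ * I)‖ := by
    rw [norm_mul, norm_exp_ofReal_mul_I, mul_one, norm_real, Real.norm_of_nonneg hr.le]
    exact hr₁.le
  have hre : ((r : ℂ) * exp (φ * I)).re = r * Real.cos φ := by
    rw [re_ofReal_mul, exp_ofReal_mul_I_re]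
  have him : ((r : ℂ) * exp (φ * I)).im = r * Real.sin φ := by
    rw [im_ofReal_mul, exp_ofReal_mul_I_im]
  rcases le_or_gt φ (π / 2) with h₁ | h₁
  · refine .inl (.inl ⟨⟨hn, ?_, ?_⟩, mem_closedBall_zero_iff.2 (hw₁ h₁).le⟩)
    · rw [hre]
      exact mul_nonneg hr.le (Real.cos_nonneg_of_mem_Icc ⟨by linarith, h₁⟩)
    · rw [him]
      exact mul_nonneg hr.le (Real.sin_nonneg_of_nonneg_of_le_pi hφ₀.le (by linarith))
  rcases lt_or_ge φ (3 * π / 2) with h₂ | h₂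
  · refine .inr ⟨⟨hn, ?_⟩, trivial⟩
    rw [hre]
    exact mul_nonpos_of_nonneg_of_nonpos hr.le
      (Real.cos_nonpos_of_pi_div_two_le_of_le h₁.le (by linarith))
  · refine .inl (.inr ⟨⟨hn, ?_, ?_⟩, (hw₃ h₂).1.le⟩)
    · rw [hre, ← Real.cos_sub_two_pi]
      exact mul_nonneg hr.le (Real.cos_nonneg_of_mem_Icc ⟨by linarith, by linarith⟩)
    · rw [him, ← Real.sin_sub_two_pi]
      exact mul_nonpos_of_nonneg_of_nonpos hr.le
        (Real.sin_nonpos_of_nonpos_of_neg_pi_le (by linarith) (by linarith))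

lemma hartogsLog_mem_Ocl : hartogsLog ∈ Ocl domD := by
  have hA : IsOpen ({z | I * ((I - 1) * z) ∈ slitPlane} ×ˢ ball (0 : ℂ) (3 / 2)) :=
    (isOpen_slitPlane.preimage (by fun_prop)).prod isOpen_ball
  have hB : IsOpen ({z | (I - 1) * z ∈ slitPlane} ×ˢ {w : ℂ | 3 / 2 < ‖w‖}) :=
    (isOpen_slitPlane.preimage (by fun_prop)).prod (isOpen_lt continuous_const continuous_norm)
  have hW₀ : IsOpen ({z : ℂ | 0 < ((I - 1) * z).re} ∪ {z | ((I - 1) * z).im < 0}) :=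
    (isOpen_lt continuous_const (by fun_prop)).union (isOpen_lt (by fun_prop) continuous_const)
  have hW : IsOpen ({z : ℂ | 0 < ((I - 1) * z).re ∨ ((I - 1) * z).im < 0} ×ˢ (univ : Set ℂ)) :=
    hW₀.prod isOpen_univ
  refine ⟨hartogsLogDomain, (hA.union hB).union hW,
    (closure_minimal domD_subset_domDCover isClosed_domDCover).trans domDCover_subset, ?_⟩
  refine DifferentiableOn.piecewise_of_eqOn ?_ ?_ hA hB hW (fun p hp => mem_ball_zero_iff.1 hp.2)
    (fun p hp => (mem_ofPred.1 hp.2).not_gt) (fun p hp => eqOn_log_I_mul hp.1)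
  · refine DifferentiableOn.clog (by fun_prop) ?_
    rintro p (⟨hp, -⟩ | ⟨hp, -⟩)
    exacts [hp, I_mul_mem_slitPlane hp]
  · exact (DifferentiableOn.clog (by fun_prop) fun p hp => hp.1).add_const _

theorem stmt5 :
    ∃ h : ℂ × ℂ → ℂ, h ∈ Ocl domD ∧
      ∀ a ∈ Icc (1 / 2 : ℝ) 1,
        ¬ ∃ F : ℂ → ℂ, DifferentiableOn ℂ F {w : ℂ | ‖w‖ < 3} ∧
          (∀ w : ℂ, ‖w‖ < 1 → F w = h ((a : ℂ), w)) ∧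
          (∀ w : ℂ, 2 < ‖w‖ → ‖w‖ < 3 → F w = h ((a : ℂ), w)) := by
  refine ⟨hartogsLog, hartogsLog_mem_Ocl, ?_⟩
  rintro a ⟨ha, -⟩ ⟨F, hF, hin, hout⟩
  have hball (R : ℝ) : {w : ℂ | ‖w‖ < R} = ball 0 R := by ext; simp
  have hinner : EqOn F (fun _ => log (I * ((I - 1) * a))) (ball 0 1) := fun w hw => by
    rw [← hball] at hw
    rw [hin w hw, hartogsLog_of_norm_lt (by linarith [hw.out])]
  rw [hball] at hF
  have hw : ‖((5 / 2 : ℝ) : ℂ)‖ = 5 / 2 := by rw [norm_real]; norm_num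
  refine log_I_mul_ne (v := (I - 1) * a) (by simp; linarith) (by simp; linarith) ?_
  calc log (I * ((I - 1) * a))
      = F ((5 / 2 : ℝ) : ℂ) :=
        (hF.eqOn_ball_of_eqOn_ball one_pos hinner (by rw [mem_ball_zero_iff, hw]; norm_num)).symm
    _ = hartogsLog (a, ((5 / 2 : ℝ) : ℂ)) := hout _ (by rw [hw]; norm_num) (by rw [hw]; norm_num)
    _ = log ((I - 1) * a) + π / 2 * I := hartogsLog_of_le_norm (by rw [hw]; norm_num)
end
end

section
/- Every function f that is continuous on cl D and holomorphic on D extends holomorphically to G; that is, there exists F holomorphic on G with F(z, w) = f(z, w) for all (z, w) ∈ D. -/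
open Set Complex

noncomputable section

/-- The Hartogs domain `G ⊃ D`. -/
def domG : Set (ℂ × ℂ) :=
  {p | ∃ r φ : ℝ, 1 / 2 < r ∧ r < 1 ∧ 0 < φ ∧ φ < 2 * Real.pi ∧
    p.1 = (r : ℂ) * Complex.exp (φ * Complex.I) ∧
    (φ ≤ Real.pi / 2 → ‖p.2‖ < 1) ∧
    (Real.pi / 2 < φ → ‖p.2‖ < 3)}

/-!
Let `S = {1/2 < |z| < 1, Re z < 0 or Im z < 0}`. For `z ∈ S` the circle `|ζ| = 5/2` lies in the
fibre `2 < |ζ| < 3` of `D`, so `T(z, w) = (2πi)⁻¹ ∮_{|ζ| = 5/2} f(z, ζ) / (ζ - w) dζ` is holomorphic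
on `S × {|w| < 5/2}`: differentiate under the integral sign, with Cauchy estimates bounding the
derivatives of `f` near the compact set `{z} × {|ζ| = 5/2}`. For `Re z < 0` the whole disc
`|w| < 3` lies in the fibre of `D`, so `T = f` there by Cauchy's formula; as `S` is connected, the
identity theorem in `z` gives `T = f` on `S × {2 < |w| < 5/2}`. Since `G \ D ⊆ S × {|w| ≤ 2}`,
gluing `T` on `S × {|w| < 5/2}` with `f` on `D` gives the extension.
-/

open scoped Real
open Metric MeasureTheory

theorem exists_closedBall_prod_subset_forall_norm_le {X Y Z : Type*} [PseudoMetricSpace X]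
    [TopologicalSpace Y] [SeminormedAddGroup Z] {Ψ : X × Y → Z} {N : Set (X × Y)} (hN : IsOpen N)
    (hΨ : ContinuousOn Ψ N) {x₀ : X} {K : Set Y} (hK : IsCompact K) (hKN : {x₀} ×ˢ K ⊆ N) :
    ∃ r > 0, ∃ M, closedBall x₀ r ×ˢ K ⊆ N ∧ ∀ q ∈ closedBall x₀ r ×ˢ K, ‖Ψ q‖ ≤ M := by
  obtain ⟨M, hM⟩ := (isCompact_singleton.prod hK).exists_bound_of_continuousOn (hΨ.mono hKN)
  have hKW : {x₀} ×ˢ K ⊆ N ∩ Ψ ⁻¹' ball 0 (M + 1) := fun q hq =>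
    ⟨hKN hq, mem_ball_zero_iff.2 ((hM q hq).trans_lt (lt_add_one M))⟩
  obtain ⟨u, v, hu, -, hx₀u, hKv, huv⟩ :=
    generalized_tube_lemma isCompact_singleton hK (hΨ.isOpen_inter_preimage hN isOpen_ball) hKW
  obtain ⟨r, hr, hru⟩ := nhds_basis_closedBall.mem_iff.1 (hu.mem_nhds (hx₀u rfl))
  have hsub := (prod_mono hru hKv).trans huv
  exact ⟨r, hr, M + 1, fun q hq => (hsub hq).1,
    fun q hq => (mem_ball_zero_iff.1 (hsub hq).2).le⟩

section CauchyEstimates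

variable {E F : Type*} [NormedAddCommGroup E] [NormedSpace ℂ E] [NormedAddCommGroup F]
  [NormedSpace ℂ F]

theorem norm_fderiv_le_of_forall_mem_sphere_norm_le [Nontrivial E] {f : E → F} {c : E}
    {R C : ℝ} (hR : 0 < R) (hf : DifferentiableOn ℂ f (closedBall c R))
    (hC : ∀ x ∈ sphere c R, ‖f x‖ ≤ C) : ‖fderiv ℂ f c‖ ≤ C / R := by
  have hunit : ∀ u : E, ‖u‖ = 1 → ‖fderiv ℂ f c u‖ ≤ C / R := by
    intro u hu
    set line : ℂ → E := fun t => c + t • u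
    have hdist : ∀ t : ℂ, dist (line t) c = ‖t‖ := fun t => by
      simp [line, dist_eq_norm, norm_smul, hu]
    have hline : Differentiable ℂ line := by fun_prop
    have hfl : DiffContOnCl ℂ (f ∘ line) (ball 0 R) := by
      refine DifferentiableOn.diffContOnCl ?_
      rw [closure_ball _ hR.ne']
      exact hf.comp hline.differentiableOn fun t ht => by
        simpa [hdist, mem_closedBall] using ht
    have hderiv : deriv (f ∘ line) 0 = fderiv ℂ f c u := by
      have hfc : DifferentiableAt ℂ f (line 0) := by
        simpa [line] using hf.differentiableAt (closedBall_mem_nhds c hR)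
      rw [fderiv_comp_deriv _ hfc (hline 0)]
      simp [line, deriv_smul_const]
    rw [← hderiv]
    exact norm_deriv_le_of_forall_mem_sphere_norm_le hR hfl fun t ht =>
      hC _ (mem_sphere.2 ((hdist t).trans (mem_sphere_zero_iff_norm.1 ht)))
  obtain ⟨u, hu⟩ := exists_norm_eq E zero_le_one
  exact ContinuousLinearMap.opNorm_le_of_unit_norm ((norm_nonneg _).trans (hunit u hu)) hunit

theorem differentiableAt_intervalIntegral_of_differentiableOn_of_norm_le [Nontrivial E]
    {Φ : E → ℝ → F} {x₀ : E} {r a b : ℝ} {μ : Measure ℝ} {bound : ℝ → ℝ} (hr : 0 < r)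
    (hΦ_int : ∀ x ∈ closedBall x₀ r, IntervalIntegrable (Φ x) μ a b)
    (hΦ_diff : ∀ θ, DifferentiableOn ℂ (Φ · θ) (closedBall x₀ r))
    (hΦ_le : ∀ θ, ∀ x ∈ closedBall x₀ r, ‖Φ x θ‖ ≤ bound θ)
    (h_bound : IntervalIntegrable bound μ a b)
    (hΦ'_meas : AEStronglyMeasurable (fun θ => fderiv ℂ (Φ · θ) x₀) (μ.restrict (uIoc a b))) :
    DifferentiableAt ℂ (fun x => ∫ θ in a..b, Φ x θ ∂μ) x₀ := by
  have hr2 : 0 < r / 2 := half_pos hr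
  have hsub : ∀ x ∈ ball x₀ (r / 2), closedBall x (r / 2) ⊆ closedBall x₀ r := fun x hx =>
    closedBall_subset_closedBall' (by linarith [mem_ball.1 hx])
  refine (intervalIntegral.hasFDerivAt_integral_of_dominated_of_fderiv_le
    (F' := fun x θ => fderiv ℂ (Φ · θ) x) (bound := fun θ => bound θ / (r / 2))
    (ball_mem_nhds x₀ hr2) ?_ (hΦ_int x₀ (mem_closedBall_self hr.le)) hΦ'_meas
    (ae_of_all _ fun θ _ x hx => ?_) (h_bound.div_const _)
    (ae_of_all _ fun θ _ x hx => ?_)).differentiableAt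
  · filter_upwards [closedBall_mem_nhds x₀ hr] with x hx
    exact (hΦ_int x hx).def'.aestronglyMeasurable
  · exact norm_fderiv_le_of_forall_mem_sphere_norm_le hr2 ((hΦ_diff θ).mono (hsub x hx))
      fun y hy => hΦ_le θ y (hsub x hx (sphere_subset_closedBall hy))
  · exact ((hΦ_diff θ).differentiableAt
      (mem_nhds_iff.2 ⟨ball x₀ r, ball_subset_closedBall, isOpen_ball,
        ball_subset_ball (by linarith) hx⟩)).hasFDerivAt

end CauchyEstimates

section SndCauchyIntegral

noncomputable def sndCauchyIntegral (c : ℂ) (R : ℝ) (g : ℂ × ℂ → ℂ) (p : ℂ × ℂ) : ℂ :=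
  (2 * π * I)⁻¹ • ∮ ζ in C(c, R), (ζ - p.2)⁻¹ • g (p.1, ζ)

variable {c : ℂ} {R : ℝ} {g : ℂ × ℂ → ℂ}

theorem sndCauchyIntegral_eq_integral (p : ℂ × ℂ) :
    sndCauchyIntegral c R g p =
      ∫ θ in 0..2 * π, circleTransform R c p.2 (fun ζ => g (p.1, ζ)) θ :=
  (integral_circleTransform ..).symm

theorem sndCauchyIntegral_apply_eq {z w : ℂ}
    (hg : DifferentiableOn ℂ (fun ζ => g (z, ζ)) (closedBall c R)) (hw : w ∈ ball c R) :
    sndCauchyIntegral c R g (z, w) = g (z, w) :=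
  (hg.diffContOnCl_ball subset_rfl).two_pi_i_inv_smul_circleIntegral_sub_inv_smul hw

theorem differentiableOn_cauchyKernel {V : Set (ℂ × ℂ)} (hV : IsOpen V)
    (hg : DifferentiableOn ℂ g V) :
    DifferentiableOn ℂ (fun q : (ℂ × ℂ) × ℂ => (q.2 - q.1.2)⁻¹ • g (q.1.1, q.2))
      {q | (q.1.1, q.2) ∈ V ∧ q.2 ≠ q.1.2} := fun q hq =>
  have hsub : DifferentiableAt ℂ (fun q : (ℂ × ℂ) × ℂ => q.2 - q.1.2) q := by fun_prop
  have hslice : DifferentiableAt ℂ (fun q : (ℂ × ℂ) × ℂ => (q.1.1, q.2)) q := by fun_prop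
  ((hsub.inv (sub_ne_zero.2 hq.2)).smul
    ((hg.differentiableAt (hV.mem_nhds hq.1)).comp q hslice)).differentiableWithinAt

theorem differentiableAt_sndCauchyIntegral {V : Set (ℂ × ℂ)} (hV : IsOpen V)
    (hg : DifferentiableOn ℂ g V) {z₀ w₀ : ℂ} (hz₀ : ∀ ζ ∈ sphere c R, (z₀, ζ) ∈ V)
    (hw₀ : w₀ ∈ ball c R) : DifferentiableAt ℂ (sndCauchyIntegral c R g) (z₀, w₀) := by
  -- the integrand at `(y, θ)` is `(2πi)⁻¹ • deriv (circleMap c R) θ • Ψ (y, circleMap c R θ)`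
  set Ψ : (ℂ × ℂ) × ℂ → ℂ := fun q => (q.2 - q.1.2)⁻¹ • g (q.1.1, q.2)
  set N : Set ((ℂ × ℂ) × ℂ) := {q | (q.1.1, q.2) ∈ V ∧ q.2 ≠ q.1.2}
  have hN : IsOpen N :=
    (hV.preimage (by fun_prop)).inter (isOpen_ne_fun (by fun_prop) (by fun_prop))
  have hΨ : DifferentiableOn ℂ Ψ N := differentiableOn_cauchyKernel hV hg
  have hKN : {(z₀, w₀)} ×ˢ sphere c R ⊆ N := by
    rintro ⟨x, ζ⟩ ⟨rfl, hζ⟩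
    exact ⟨hz₀ ζ hζ, fun h => (mem_sphere.1 hζ).not_lt (h ▸ mem_ball.1 hw₀)⟩
  obtain ⟨r, hr, M, hrN, hM⟩ := exists_closedBall_prod_subset_forall_norm_le hN hΨ.continuousOn
    (isCompact_sphere c R) hKN
  have hcircle : ∀ θ, circleMap c R θ ∈ sphere c R :=
    circleMap_mem_sphere c (pos_of_mem_ball hw₀).le
  have hderiv : Continuous (deriv (circleMap c R)) := by
    rw [funext (deriv_circleMap c R)]; fun_prop
  set Φ' : ℂ × ℂ → ℝ → (ℂ × ℂ →L[ℂ] ℂ) := fun y θ => (2 * π * I)⁻¹ •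
    deriv (circleMap c R) θ • (fderiv ℂ Ψ (y, circleMap c R θ)).comp (.inl ℂ (ℂ × ℂ) ℂ)
  have hΦ' : ∀ y ∈ closedBall (z₀, w₀) r, ∀ θ, HasFDerivAt
      (fun x : ℂ × ℂ => circleTransform R c x.2 (fun ζ => g (x.1, ζ)) θ) (Φ' y θ) y := by
    intro y hy θ
    have hΨ_slice := (hΨ.differentiableAt (hN.mem_nhds (hrN ⟨hy, hcircle θ⟩))).hasFDerivAt.comp y
      (hasFDerivAt_prodMk_left (𝕜 := ℂ) y (circleMap c R θ))
    exact (hΨ_slice.const_smul (deriv (circleMap c R) θ)).const_smul (2 * π * I)⁻¹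
  refine (differentiableAt_intervalIntegral_of_differentiableOn_of_norm_le hr
    (bound := fun θ => ‖(2 * π * I)⁻¹ • deriv (circleMap c R) θ‖ * M)
    (fun y hy => ?_) (fun θ y hy => (hΦ' y hy θ).differentiableAt.differentiableWithinAt)
    (fun θ y hy => ?_) ((by fun_prop : Continuous _).intervalIntegrable _ _) ?_
    ).congr_of_eventuallyEq (.of_forall sndCauchyIntegral_eq_integral)
  · have hΨ_circle : Continuous fun θ => Ψ (y, circleMap c R θ) :=
      hΨ.continuousOn.comp_continuous (by fun_prop) fun θ => hrN ⟨hy, hcircle θ⟩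
    exact ((hderiv.smul hΨ_circle).const_smul (2 * π * I)⁻¹).intervalIntegrable _ _
  · change ‖(2 * π * I)⁻¹ • deriv (circleMap c R) θ • Ψ (y, circleMap c R θ)‖ ≤ _
    rw [← smul_assoc, norm_smul]
    exact mul_le_mul_of_nonneg_left (hM _ ⟨hy, hcircle θ⟩) (norm_nonneg _)
  · have hx₀ := mem_closedBall_self (x := (z₀, w₀)) hr.le
    rw [funext fun θ => (hΦ' _ hx₀ θ).fderiv]
    refine Measurable.aestronglyMeasurable ?_
    simp only [Φ', funext (deriv_circleMap c R)]
    fun_prop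

end SndCauchyIntegral

theorem quadrant_cases_of_eq_ofReal_mul_exp {z : ℂ} {r φ : ℝ} (hr : 0 < r) (hφ₀ : 0 < φ)
    (hφ : φ < 2 * π) (hz : z = r * exp (φ * I)) :
    (φ ≤ π / 2 ∧ 0 ≤ z.re ∧ 0 < z.im) ∨ (π / 2 < φ ∧ φ < 3 * π / 2 ∧ z.re < 0) ∨
      (3 * π / 2 ≤ φ ∧ 0 ≤ z.re ∧ z.im < 0) := by
  have hre : z.re = r * Real.cos φ := by simp [hz, exp_ofReal_mul_I_re]
  have him : z.im = r * Real.sin φ := by simp [hz, exp_ofReal_mul_I_im]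
  rw [hre, him]
  rcases le_or_gt φ (π / 2) with h₁ | h₁
  · exact .inl ⟨h₁, mul_nonneg hr.le (Real.cos_nonneg_of_mem_Icc ⟨by linarith, h₁⟩),
      mul_pos hr (Real.sin_pos_of_pos_of_lt_pi hφ₀ (by linarith [Real.pi_pos]))⟩
  rcases lt_or_ge φ (3 * π / 2) with h₂ | h₂
  · exact .inr (.inl ⟨h₁, h₂,
      mul_neg_of_pos_of_neg hr (Real.cos_neg_of_pi_div_two_lt_of_lt h₁ (by linarith))⟩)
  · rw [← Real.cos_sub_two_pi, ← Real.sin_sub_two_pi]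
    exact .inr (.inr ⟨h₂,
      mul_nonneg hr.le (Real.cos_nonneg_of_mem_Icc ⟨by linarith, by linarith [Real.pi_pos]⟩),
      mul_neg_of_pos_of_neg hr (Real.sin_neg_of_neg_of_neg_pi_lt (by linarith) (by linarith))⟩)

theorem exists_eq_norm_mul_exp_of_not_nonneg_real {z : ℂ} (hz : z.re < 0 ∨ z.im ≠ 0) :
    ∃ φ : ℝ, 0 < φ ∧ φ < 2 * π ∧ z = ‖z‖ * exp (φ * I) := by
  refine ⟨arg (-z) + π, by linarith [neg_pi_lt_arg (-z)], ?_, ?_⟩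
  · have : arg (-z) < π := arg_lt_pi_iff.2 (by simp only [neg_re, neg_im]; grind)
    linarith
  · rw [← norm_neg, ofReal_add, add_mul, exp_add, ← mul_assoc, norm_mul_exp_arg_mul_I,
      exp_pi_mul_I]
    ring

theorem norm_ofReal_mul_exp_ofReal_mul_I {r : ℝ} (hr : 0 ≤ r) (φ : ℝ) :
    ‖(r : ℂ) * exp (φ * I)‖ = r := by
  simp [abs_of_nonneg hr]

theorem mem_domD_iff {z w : ℂ} :
    (z, w) ∈ domD ↔ 1 / 2 < ‖z‖ ∧ ‖z‖ < 1 ∧ ((0 < z.im ∧ ‖w‖ < 1) ∨ (z.re < 0 ∧ ‖w‖ < 3) ∨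
      ((z.re < 0 ∨ z.im < 0) ∧ 2 < ‖w‖ ∧ ‖w‖ < 3)) := by
  constructor
  · rintro ⟨r, φ, hr₁, hr₂, hφ₀, hφ, hz, h₁, h₂, h₃⟩
    dsimp only at hz h₁ h₂ h₃
    have hr : ‖z‖ = r := hz ▸ norm_ofReal_mul_exp_ofReal_mul_I (by linarith) φ
    rcases quadrant_cases_of_eq_ofReal_mul_exp (by linarith) hφ₀ hφ hz with h | h | h <;> grind
  · rintro ⟨hz₁, hz₂, hw⟩
    obtain ⟨φ, hφ₀, hφ, hz⟩ := exists_eq_norm_mul_exp_of_not_nonneg_real (z := z) (by grind)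
    refine ⟨‖z‖, φ, hz₁, hz₂, hφ₀, hφ, hz, ?_⟩
    rcases quadrant_cases_of_eq_ofReal_mul_exp (by linarith) hφ₀ hφ hz with h | h | h <;> grind

def annularSector : Set ℂ := {z | 1 / 2 < ‖z‖ ∧ ‖z‖ < 1 ∧ (z.re < 0 ∨ z.im < 0)}

theorem domG_subset : domG ⊆ domD ∪ annularSector ×ˢ ball 0 (5 / 2) := by
  rintro ⟨z, w⟩ ⟨r, φ, hr₁, hr₂, hφ₀, hφ, hz, h₁, h₂⟩
  dsimp only at hz h₁ h₂
  have hr : ‖z‖ = r := hz ▸ norm_ofReal_mul_exp_ofReal_mul_I (by linarith) φ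
  simp only [mem_union, mem_domD_iff, mem_prod, annularSector, mem_ofPred_eq, mem_ball_zero_iff]
  rcases quadrant_cases_of_eq_ofReal_mul_exp (by linarith) hφ₀ hφ hz with h | h | h <;> grind

theorem isOpen_domD : IsOpen domD := by
  have : domD = {p : ℂ × ℂ | 1 / 2 < ‖p.1‖ ∧ ‖p.1‖ < 1 ∧ ((0 < p.1.im ∧ ‖p.2‖ < 1) ∨
      (p.1.re < 0 ∧ ‖p.2‖ < 3) ∨ ((p.1.re < 0 ∨ p.1.im < 0) ∧ 2 < ‖p.2‖ ∧ ‖p.2‖ < 3))} :=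
    Set.ext fun p => mem_domD_iff
  rw [this]
  simp only [ofPred_and, ofPred_or]
  apply_rules [IsOpen.inter, IsOpen.union, isOpen_lt] <;> fun_prop

theorem isOpen_annularSector : IsOpen annularSector := by
  simp only [annularSector, ofPred_and, ofPred_or]
  apply_rules [IsOpen.inter, IsOpen.union, isOpen_lt] <;> fun_prop

theorem isPreconnected_annularSector : IsPreconnected annularSector := by
  have : annularSector = (fun q : ℝ × ℝ => (q.1 : ℂ) * exp (q.2 * I)) ''
      (Ioo (1 / 2) 1 ×ˢ Ioo (π / 2) (2 * π)) := by
    ext z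
    constructor
    · rintro ⟨hz₁, hz₂, hz⟩
      obtain ⟨φ, hφ₀, hφ, hzφ⟩ := exists_eq_norm_mul_exp_of_not_nonneg_real (z := z) (by grind)
      refine ⟨(‖z‖, φ), ⟨⟨hz₁, hz₂⟩, ?_, hφ⟩, hzφ.symm⟩
      rcases quadrant_cases_of_eq_ofReal_mul_exp (by linarith) hφ₀ hφ hzφ with h | h | h <;> grind
    · rintro ⟨⟨r, φ⟩, ⟨⟨hr₁, hr₂⟩, hφ₁, hφ⟩, rfl⟩
      have hr := norm_ofReal_mul_exp_ofReal_mul_I (by linarith : (0:ℝ) ≤ r) φ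
      rcases quadrant_cases_of_eq_ofReal_mul_exp (by linarith) (by linarith [Real.pi_pos]) hφ rfl
        with h | h | h
        <;> simp only [annularSector, mem_ofPred_eq, hr] <;> grind
  rw [this]
  exact ((convex_Ioo _ _).prod (convex_Ioo _ _)).isPreconnected.image _ (by fun_prop)

section

variable {f : ℂ × ℂ → ℂ}

theorem sndCauchyIntegral_eq_of_re_neg (hf : DifferentiableOn ℂ f domD) {z w : ℂ}
    (hz₁ : 1 / 2 < ‖z‖) (hz₂ : ‖z‖ < 1) (hre : z.re < 0) (hw : w ∈ ball 0 (5 / 2)) :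
    sndCauchyIntegral 0 (5 / 2) f (z, w) = f (z, w) := by
  refine sndCauchyIntegral_apply_eq (fun ζ hζ => ?_) hw
  have hzζ : (z, ζ) ∈ domD := mem_domD_iff.2
    ⟨hz₁, hz₂, .inr (.inl ⟨hre, by linarith [mem_closedBall_zero_iff.1 hζ]⟩)⟩
  exact ((hf.differentiableAt (isOpen_domD.mem_nhds hzζ)).comp ζ
    (differentiableAt_const z |>.prodMk differentiableAt_id)).differentiableWithinAt

theorem differentiableOn_sndCauchyIntegral (hf : DifferentiableOn ℂ f domD) :
    DifferentiableOn ℂ (sndCauchyIntegral 0 (5 / 2) f) (annularSector ×ˢ ball 0 (5 / 2)) :=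
  fun p ⟨⟨hz₁, hz₂, hz⟩, hw⟩ => (differentiableAt_sndCauchyIntegral isOpen_domD hf
    (fun ζ hζ => mem_domD_iff.2 ⟨hz₁, hz₂, .inr (.inr ⟨hz, by
      norm_num [mem_sphere_zero_iff_norm.1 hζ]⟩)⟩) hw).differentiableWithinAt

theorem sndCauchyIntegral_eq_of_mem_annularSector (hf : DifferentiableOn ℂ f domD) {z w : ℂ}
    (hz : z ∈ annularSector) (hw₁ : 2 < ‖w‖) (hw₂ : ‖w‖ < 5 / 2) :
    sndCauchyIntegral 0 (5 / 2) f (z, w) = f (z, w) := by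
  have hw : w ∈ ball 0 (5 / 2) := mem_ball_zero_iff.2 hw₂
  have hT : DifferentiableOn ℂ (fun z => sndCauchyIntegral 0 (5 / 2) f (z, w)) annularSector :=
    (differentiableOn_sndCauchyIntegral hf).comp (by fun_prop) fun z hz => ⟨hz, hw⟩
  have hf' : DifferentiableOn ℂ (fun z => f (z, w)) annularSector := fun z ⟨hz₁, hz₂, hz⟩ =>
    have hzw : (z, w) ∈ domD := mem_domD_iff.2 ⟨hz₁, hz₂, .inr (.inr ⟨hz, hw₁, by linarith⟩)⟩
    ((hf.differentiableAt (isOpen_domD.mem_nhds hzw)).comp z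
      (differentiableAt_id.prodMk (differentiableAt_const w))).differentiableWithinAt
  -- both sides agree near `-3/4` by the Cauchy formula; the sector is connected
  have hleft : IsOpen {z : ℂ | 1 / 2 < ‖z‖ ∧ ‖z‖ < 1 ∧ z.re < 0} := by
    simp only [ofPred_and]
    apply_rules [IsOpen.inter, isOpen_lt] <;> fun_prop
  have h₀ : (-3 / 4 : ℂ) ∈ {z : ℂ | 1 / 2 < ‖z‖ ∧ ‖z‖ < 1 ∧ z.re < 0} := by norm_num
  refine (hT.analyticOnNhd isOpen_annularSector).eqOn_of_preconnected_of_eventuallyEq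
    (hf'.analyticOnNhd isOpen_annularSector) isPreconnected_annularSector
    (z₀ := -3 / 4) (by norm_num [annularSector]) ?_ hz
  filter_upwards [hleft.mem_nhds h₀] with z ⟨hz₁, hz₂, hre⟩
  exact sndCauchyIntegral_eq_of_re_neg hf hz₁ hz₂ hre hw

theorem sndCauchyIntegral_eqOn (hf : DifferentiableOn ℂ f domD) :
    EqOn (sndCauchyIntegral 0 (5 / 2) f) f (annularSector ×ˢ ball 0 (5 / 2) ∩ domD) := by
  rintro ⟨z, w⟩ ⟨⟨hz, hw⟩, hzw⟩
  obtain ⟨hz₁, hz₂, ⟨him, -⟩ | ⟨hre, -⟩ | ⟨-, hw₁, -⟩⟩ := mem_domD_iff.1 hzw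
  · exact sndCauchyIntegral_eq_of_re_neg hf hz₁ hz₂ (hz.2.2.resolve_right him.not_gt) hw
  · exact sndCauchyIntegral_eq_of_re_neg hf hz₁ hz₂ hre hw
  · exact sndCauchyIntegral_eq_of_mem_annularSector hf hz hw₁ (mem_ball_zero_iff.1 hw)

end

theorem stmt6 (f : ℂ × ℂ → ℂ) (hf : f ∈ Acl domD) :
    ∃ F : ℂ × ℂ → ℂ, DifferentiableOn ℂ F domG ∧ ∀ p ∈ domD, F p = f p := by
  classical
  obtain ⟨-, hf⟩ := hf
  set W := annularSector ×ˢ ball (0 : ℂ) (5 / 2)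
  set F := W.piecewise (sndCauchyIntegral 0 (5 / 2) f) f
  have hFf : ∀ p ∈ domD, F p = f p := fun p hp => by
    by_cases hpW : p ∈ W
    · exact (piecewise_eq_of_mem _ _ _ hpW).trans (sndCauchyIntegral_eqOn hf ⟨hpW, hp⟩)
    · exact piecewise_eq_of_notMem _ _ _ hpW
  refine ⟨F, fun p hp => ?_, hFf⟩
  rcases domG_subset hp with hpD | hpW
  · have hD := isOpen_domD.mem_nhds hpD
    exact ((hf.differentiableAt hD).congr_of_eventuallyEq
      (Filter.eventually_of_mem hD hFf)).differentiableWithinAt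
  · have hW := (isOpen_annularSector.prod isOpen_ball).mem_nhds hpW
    exact (((differentiableOn_sndCauchyIntegral hf).differentiableAt hW).congr_of_eventuallyEq
      (Filter.eventually_of_mem hW fun q hq => piecewise_eq_of_mem _ _ _ hq)
      ).differentiableWithinAt
end
end

section
/- For every function f holomorphic on an open neighborhood of cl D one has sup_{∂D} |f| = sup_{∂D \ (I₀ × 𝔻)} |f|, where I₀ × 𝔻 = {(x, w) : x ∈ (1/2, 1), |w| < 1} is a relatively open subset of ∂D. -/
open Set Complex

noncomputable section

open Metric Filter Topology

/-
On the slit `I₀ × 𝔻` the domain has no points at all (it omits the argument `φ = 0`), yet every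
point `(x, w)` with `x ∈ I₀`, `|w| ≤ 1` is a limit of points of `D` with small `φ > 0`. Hence for
`x ∈ I₀` the whole closed disc `{x} × cl 𝔻` lies in `∂D`, and by the maximum modulus principle in
the variable `w` the value of `|f|` at a point of the slit is dominated by its values on the circle
`{x} × ∂𝔻`, which lies in `∂D` outside the slit.
-/

lemma csSup_image_diff_eq {α : Type*} {g : α → ℝ} {s t : Set α} (hbdd : BddAbove (g '' s))
    (hne : (s \ t).Nonempty)
    (hdom : ∀ p ∈ s ∩ t, ∀ C, (∀ q ∈ s \ t, g q ≤ C) → g p ≤ C) :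
    sSup (g '' s) = sSup (g '' (s \ t)) := by
  have hsub : g '' (s \ t) ⊆ g '' s := image_mono sdiff_subset
  have hle : ∀ q ∈ s \ t, g q ≤ sSup (g '' (s \ t)) := fun q hq =>
    le_csSup (hbdd.mono hsub) (mem_image_of_mem g hq)
  refine le_antisymm (csSup_le ((hne.image g).mono hsub) ?_)
    (csSup_le_csSup hbdd (hne.image g) hsub)
  rintro _ ⟨p, hp, rfl⟩
  by_cases ht : p ∈ t
  · exact hdom p ⟨hp, ht⟩ _ hle
  · exact hle p ⟨hp, ht⟩

lemma norm_apply_mk_le_of_forall_mem_sphere {E : Type*} [NormedAddCommGroup E]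
    [NormedSpace ℂ E] {f : E × ℂ → ℂ} {U : Set (E × ℂ)} (hf : DifferentiableOn ℂ f U) {a : E}
    {c : ℂ} {r : ℝ} (hr : 0 < r) (hU : ∀ ζ ∈ closedBall c r, (a, ζ) ∈ U) {C : ℝ}
    (hC : ∀ ζ ∈ sphere c r, ‖f (a, ζ)‖ ≤ C) {w : ℂ} (hw : w ∈ closedBall c r) :
    ‖f (a, w)‖ ≤ C := by
  have hslice : DifferentiableOn ℂ (fun ζ => f (a, ζ)) (closedBall c r) :=
    hf.comp ((differentiableOn_const a).prodMk differentiableOn_id) hU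
  refine norm_le_of_forall_mem_frontier_norm_le (isBounded_ball (x := c) (r := r)) ?_
    (fun ζ hζ => hC ζ ?_) ?_
  · rw [← closure_ball c hr.ne'] at hslice
    exact hslice.diffContOnCl
  · rwa [frontier_ball c hr.ne'] at hζ
  · rwa [closure_ball c hr.ne']

lemma exp_ofReal_mul_I_ne_one {φ : ℝ} (h0 : 0 < φ) (h2 : φ < 2 * Real.pi) :
    exp (φ * I) ≠ 1 := by
  rw [Ne, Complex.exp_eq_one_iff]
  rintro ⟨n, hn⟩
  have hφ : φ = n * (2 * Real.pi) := by simpa using congrArg im hn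
  have hpi : 0 < 2 * Real.pi := by positivity
  have hn0 : (0 : ℤ) < n := by
    exact_mod_cast pos_of_mul_pos_left (hφ ▸ h0 : 0 < (n : ℝ) * (2 * Real.pi)) hpi.le
  have hn1 : n < (1 : ℤ) := by
    have : (n : ℝ) * (2 * Real.pi) < 1 * (2 * Real.pi) := by rwa [one_mul, ← hφ]
    exact_mod_cast lt_of_mul_lt_mul_right this hpi.le
  omega

lemma domD_isBounded : Bornology.IsBounded domD := by
  refine (isBounded_closedBall (x := (0 : ℂ × ℂ)) (r := 3)).subset ?_
  rintro ⟨z, w⟩ ⟨r, φ, hr1, hr2, -, -, hz, hw1, hw2, hw3⟩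
  rw [mem_closedBall_zero_iff, Prod.norm_def]
  refine max_le ?_ ?_
  · rw [hz, norm_mul, norm_exp_ofReal_mul_I, mul_one, norm_real, Real.norm_of_nonneg (by linarith)]
    linarith
  · rcases le_or_gt φ (Real.pi / 2) with h | h
    · linarith [hw1 h]
    · rcases lt_or_ge φ (3 * Real.pi / 2) with h' | h'
      · exact (hw2 h h').le
      · exact (hw3 h').2.le

lemma ofReal_mk_notMem_domD {x : ℝ} (hx : 0 < x) (w : ℂ) : ((x : ℂ), w) ∉ domD := by
  rintro ⟨r, φ, hr1, -, hφ0, hφ2, hz, -⟩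
  have hr : 0 < r := by linarith
  have hxr : x = r := by
    simpa [norm_exp_ofReal_mul_I, abs_of_pos hx, abs_of_pos hr] using congrArg (‖·‖) hz
  subst hxr
  refine exp_ofReal_mul_I_ne_one hφ0 hφ2 (mul_left_cancel₀ (ofReal_ne_zero.mpr hr.ne') ?_)
  rw [mul_one]
  exact hz.symm

lemma ofReal_mk_mem_closure_domD {x : ℝ} (hx1 : 1 / 2 < x) (hx2 : x < 1) {w : ℂ}
    (hw : ‖w‖ ≤ 1) : ((x : ℂ), w) ∈ closure domD := by
  have hball : ({(x : ℂ)} : Set ℂ) ×ˢ ball 0 1 ⊆ closure domD := by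
    rintro ⟨z, ζ⟩ ⟨rfl, hζ⟩
    refine mem_closure_of_tendsto (b := 𝓝[>] (0 : ℝ))
      (f := fun φ : ℝ => ((x : ℂ) * exp (φ * I), ζ)) ?_ ?_
    · have hcont : Continuous fun φ : ℝ => ((x : ℂ) * exp (φ * I), ζ) := by fun_prop
      simpa using (hcont.tendsto 0).mono_left nhdsWithin_le_nhds
    · filter_upwards [Ioo_mem_nhdsGT (by positivity : (0 : ℝ) < Real.pi / 2)] with φ hφ
      have := Real.pi_pos
      refine ⟨x, φ, hx1, hx2, hφ.1, by linarith [hφ.2], rfl,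
        fun _ => mem_ball_zero_iff.mp hζ, fun h _ => absurd h (by linarith [hφ.2]),
        fun h => absurd h (by linarith [hφ.2])⟩
  refine closure_minimal hball isClosed_closure ?_
  rw [closure_prod_eq, closure_singleton, closure_ball (0 : ℂ) one_ne_zero]
  exact ⟨rfl, mem_closedBall_zero_iff.mpr hw⟩

lemma ofReal_mk_mem_frontier_domD {x : ℝ} (hx1 : 1 / 2 < x) (hx2 : x < 1) {w : ℂ}
    (hw : ‖w‖ ≤ 1) : ((x : ℂ), w) ∈ frontier domD :=
  ⟨ofReal_mk_mem_closure_domD hx1 hx2 hw,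
    fun h => ofReal_mk_notMem_domD (by linarith) w (interior_subset h)⟩

theorem stmt11 (f : ℂ × ℂ → ℂ) (hf : f ∈ Ocl domD) :
    sSup ((fun p => ‖f p‖) '' frontier domD) =
      sSup ((fun p => ‖f p‖) '' (frontier domD \
        {p : ℂ × ℂ | (∃ x : ℝ, 1 / 2 < x ∧ x < 1 ∧ p.1 = (x : ℂ)) ∧ ‖p.2‖ < 1})) := by
  obtain ⟨U, -, hclU, hfU⟩ := hf
  have hcompact : IsCompact (frontier domD) :=
    domD_isBounded.isCompact_closure.of_isClosed_subset isClosed_frontier frontier_subset_closure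
  refine csSup_image_diff_eq ?_ ?_ ?_
  · exact (hcompact.image_of_continuousOn
      (hfU.continuousOn.mono (frontier_subset_closure.trans hclU)).norm).bddAbove
  · refine ⟨(((3 / 4 : ℝ) : ℂ), 1), ofReal_mk_mem_frontier_domD (by norm_num) (by norm_num)
      (by simp), fun h => ?_⟩
    simpa using h.2
  · rintro ⟨_, w⟩ ⟨-, ⟨x, hx1, hx2, rfl⟩, hw⟩ C hC
    refine norm_apply_mk_le_of_forall_mem_sphere hfU one_pos
      (fun ζ hζ => hclU (ofReal_mk_mem_closure_domD hx1 hx2 (mem_closedBall_zero_iff.mp hζ)))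
      (fun ζ hζ => hC _ ⟨?_, ?_⟩) (mem_closedBall_zero_iff.mpr hw.le)
    · exact ofReal_mk_mem_frontier_domD hx1 hx2 (mem_sphere_zero_iff_norm.mp hζ).le
    · rintro ⟨-, hlt⟩
      exact (mem_sphere_zero_iff_norm.mp hζ ▸ hlt).false
end
end

section
/- Let K_B ⊆ cl D be a compact set that is norming for O(cl D) and contained in every compact set norming for O(cl D). Then K_B ∩ (I₀ × 𝔻) = ∅, i.e. K_B contains no point (x, w) with x ∈ (1/2, 1) and |w| < 1. -/
open Set Complex

noncomputable section

/-!
Over every point of `D` with `|w| < 1` the domain contains the whole fiber disc `{z} × 𝔻`, since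
the only piece of `D` that omits small `|w|` is the one over `3π/2 ≤ φ < 2π`; passing to the
closure, `cl D` contains the closed disc `{z} × cl 𝔻` over every point with `|w| < 1`. By the
maximum modulus principle on these discs, `cl D ∩ {|w| ≥ 1}` is a compact norming set for
`O(cl D)`, so the minimal one lies inside it.
-/

open Metric

lemma mk_mem_closure_of_fiber_stable {X Y : Type*} [TopologicalSpace X] [TopologicalSpace Y]
    {S : Set (X × Y)} {B : Set Y} (hB : IsOpen B)
    (hS : ∀ z w w', (z, w) ∈ S → w ∈ B → w' ∈ B → (z, w') ∈ S)
    {q : X × Y} (hq : q ∈ closure S) (hqB : q.2 ∈ B) {w : Y} (hw : w ∈ closure B) :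
    (q.1, w) ∈ closure S := by
  set P := Prod.fst '' (S ∩ Prod.snd ⁻¹' B)
  have hPB : P ×ˢ B ⊆ S := by
    rintro ⟨z, w'⟩ ⟨⟨p, ⟨hpS, hpB⟩, rfl⟩, hw'⟩
    exact hS p.1 p.2 w' hpS hpB hw'
  have hSP : S ∩ Prod.snd ⁻¹' B ⊆ P ×ˢ B := fun p hp => ⟨mem_image_of_mem _ hp, hp.2⟩
  have hqP : q ∈ closure P ×ˢ closure B := by
    rw [← closure_prod_eq]
    refine closure_mono hSP ?_
    rw [inter_comm]
    exact (hB.preimage continuous_snd).inter_closure ⟨hqB, hq⟩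
  refine closure_mono hPB ?_
  rw [closure_prod_eq]
  exact ⟨hqP.1, hw⟩

lemma exists_norm_eq_one_isMaxOn_norm {f : ℂ → ℂ} (hf : DifferentiableOn ℂ f (closedBall 0 1)) :
    ∃ w, ‖w‖ = 1 ∧ IsMaxOn (‖f ·‖) (closedBall 0 1) w := by
  have hd : DiffContOnCl ℂ f (ball 0 1) := by
    apply DifferentiableOn.diffContOnCl
    rwa [closure_ball 0 one_ne_zero]
  obtain ⟨w, hw, hmax⟩ :=
    Complex.exists_mem_frontier_isMaxOn_norm isBounded_ball ⟨0, mem_ball_self one_pos⟩ hd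
  rw [frontier_ball 0 one_ne_zero, mem_sphere_zero_iff_norm] at hw
  rw [closure_ball 0 one_ne_zero] at hmax
  exact ⟨w, hw, hmax⟩

lemma isNorming_inter_one_le_norm_snd {E : Type*} [NormedAddCommGroup E] [NormedSpace ℂ E]
    {S : Set (E × ℂ)}
    (hS : ∀ q ∈ closure S, ‖q.2‖ < 1 → ∀ w : ℂ, ‖w‖ ≤ 1 → (q.1, w) ∈ closure S) :
    IsNorming S (closure S ∩ {p | 1 ≤ ‖p.2‖}) (Ocl S) := by
  rintro f ⟨U, -, hSU, hf⟩
  refine csSup_eq_csSup_of_forall_exists_le ?_ ?_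
  · rintro _ ⟨p, hp, rfl⟩
    exact ⟨_, mem_image_of_mem _ hp.1, le_rfl⟩
  rintro _ ⟨q, hq, rfl⟩
  by_cases hq2 : 1 ≤ ‖q.2‖
  · exact ⟨_, mem_image_of_mem _ ⟨hq, hq2⟩, le_rfl⟩
  have hdisc : ∀ w ∈ closedBall (0 : ℂ) 1, (q.1, w) ∈ closure S := fun w hw =>
    hS q hq (not_le.mp hq2) w (mem_closedBall_zero_iff.mp hw)
  obtain ⟨w, hw, hmax⟩ := exists_norm_eq_one_isMaxOn_norm (f := fun w => f (q.1, w))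
    (hf.comp (differentiableOn_const _ |>.prodMk differentiableOn_id) fun w hw => hSU (hdisc w hw))
  refine ⟨_, mem_image_of_mem _ ⟨hdisc w (mem_closedBall_zero_iff.mpr hw.le), hw.ge⟩, ?_⟩
  exact hmax (mem_closedBall_zero_iff.mpr (not_le.mp hq2).le)

lemma mk_mem_domD_of_norm_lt_one {z w w' : ℂ} (h : (z, w) ∈ domD) (hw : ‖w‖ < 1)
    (hw' : ‖w'‖ < 1) : (z, w') ∈ domD := by
  obtain ⟨r, φ, hr, hr', hφ, hφ', hz, -, -, hlast⟩ := h
  refine ⟨r, φ, hr, hr', hφ, hφ', hz, fun _ => hw', fun _ _ => hw'.trans (by norm_num),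
    fun h => ?_⟩
  linarith [(hlast h).1]

lemma mk_mem_closure_domD {q : ℂ × ℂ} (hq : q ∈ closure domD) (hq2 : ‖q.2‖ < 1) {w : ℂ}
    (hw : ‖w‖ ≤ 1) : (q.1, w) ∈ closure domD := by
  refine mk_mem_closure_of_fiber_stable (isOpen_ball (x := 0) (ε := 1)) ?_ hq
    (mem_ball_zero_iff.mpr hq2) (by rwa [closure_ball 0 one_ne_zero, mem_closedBall_zero_iff])
  intro _ _ _ h hw hw'
  exact mk_mem_domD_of_norm_lt_one h (mem_ball_zero_iff.mp hw) (mem_ball_zero_iff.mp hw')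

lemma isCompact_closure_domD : IsCompact (closure domD) := by
  refine (isBounded_closedBall (x := (0 : ℂ × ℂ)) (r := 3)).subset ?_ |>.isCompact_closure
  rintro ⟨z, w⟩ ⟨r, φ, hr, hr', -, -, hz, h₁, h₂, h₃⟩
  rw [mem_closedBall_zero_iff, Prod.norm_def, max_le_iff]
  constructor
  · rw [hz, norm_mul, Complex.norm_real, Real.norm_of_nonneg (by linarith),
      Complex.norm_exp_ofReal_mul_I]
    linarith
  · rcases le_or_gt φ (Real.pi / 2) with h | h
    · linarith [h₁ h]
    rcases lt_or_ge φ (3 * Real.pi / 2) with h' | h'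
    · exact (h₂ h h').le
    · exact (h₃ h').2.le

theorem stmt13 (KB : Set (ℂ × ℂ)) (hKB : IsShilovFor domD (Ocl domD) KB) :
    KB ∩ {p : ℂ × ℂ | (∃ x : ℝ, 1 / 2 < x ∧ x < 1 ∧ p.1 = (x : ℂ)) ∧ ‖p.2‖ < 1} = ∅ := by
  have hnorming : IsNorming domD (closure domD ∩ {p | 1 ≤ ‖p.2‖}) (Ocl domD) :=
    isNorming_inter_one_le_norm_snd fun _ hq hq2 _ hw => mk_mem_closure_domD hq hq2 hw
  have hcompact : IsCompact (closure domD ∩ {p : ℂ × ℂ | 1 ≤ ‖p.2‖}) :=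
    isCompact_closure_domD.inter_right (isClosed_le continuous_const continuous_snd.norm)
  have hKB_sub : KB ⊆ {p | 1 ≤ ‖p.2‖} :=
    (hKB.2.2.2 _ hcompact inter_subset_left hnorming).trans inter_subset_right
  refine eq_empty_of_forall_notMem ?_
  rintro p ⟨hpK, -, hp2⟩
  exact (hKB_sub hpK).not_gt hp2
end
end

section
/- Every point of M₁ := {re^{iφ} : r ∈ {1/2, 1}, π/2 ≤ φ ≤ 2π} × 3𝕋 is a peak point for O(cl D): for every (a, b) ∈ M₁ there exists a function f holomorphic on an open neighborhood of cl D such that f(a, b) = 1 and |f(z, w)| < 1 for all (z, w) ∈ cl D \ {(a, b)}. -/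
open Set Complex

noncomputable section

/-!
The closure of `D` lies in `A × cl(3𝔻)` with `A = {1/2 ≤ |z| ≤ 1}`, so a peak function at `(a, b)` is
the product of one peaking at `a` on `A` and one peaking at `b` on `cl(3𝔻)`. On `|z| ≤ |a|` the
function `z / a`, and on `|z| ≥ |a|` the function `a / z`, has modulus `≤ 1` and equals `1` only at
`a`; averaging with `1` makes the peak strict, by strict convexity of the closed unit disc. Both are
holomorphic off `z = 0`, which is a neighbourhood of `cl D`.
-/

def IsPeakFunction {X : Type*} (f : X → ℂ) (K : Set X) (x : X) : Prop :=
  f x = 1 ∧ ∀ y ∈ K, y ≠ x → ‖f y‖ < 1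

namespace IsPeakFunction

variable {X Y : Type*} {f : X → ℂ} {g : Y → ℂ} {K : Set X} {L : Set Y} {x : X} {y : Y}

lemma norm_le_one (hf : IsPeakFunction f K x) {z : X} (hz : z ∈ K) : ‖f z‖ ≤ 1 := by
  rcases eq_or_ne z x with rfl | hne
  · simp [hf.1]
  · exact (hf.2 z hz hne).le

lemma mono (hf : IsPeakFunction f K x) {K' : Set X} (hK : K' ⊆ K) : IsPeakFunction f K' x :=
  ⟨hf.1, fun z hz hne => hf.2 z (hK hz) hne⟩

lemma prod (hf : IsPeakFunction f K x) (hg : IsPeakFunction g L y) :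
    IsPeakFunction (fun p : X × Y => f p.1 * g p.2) (K ×ˢ L) (x, y) := by
  refine ⟨by simp [hf.1, hg.1], fun p ⟨hp₁, hp₂⟩ hne => ?_⟩
  rw [norm_mul]
  rcases eq_or_ne p.1 x with h₁ | h₁
  · have h₂ : p.2 ≠ y := fun h₂ => hne (Prod.ext h₁ h₂)
    simpa [h₁, hf.1] using hg.2 _ hp₂ h₂
  · exact mul_lt_one_of_nonneg_of_lt_one_left (norm_nonneg _) (hf.2 _ hp₁ h₁)
      (hg.norm_le_one hp₂)

end IsPeakFunction

lemma norm_one_add_div_two_lt {u : ℂ} (hu : ‖u‖ ≤ 1) (hne : u ≠ 1) : ‖(1 + u) / 2‖ < 1 := by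
  have hmid : (1 + u) / 2 = (1 / 2 : ℝ) • (1 : ℂ) + (1 / 2 : ℝ) • u := by
    rw [Complex.real_smul, Complex.real_smul]
    push_cast
    ring
  rw [hmid]
  exact norm_combo_lt_of_ne (norm_one (α := ℂ)).le hu hne.symm (by norm_num) (by norm_num)
    (by norm_num)

lemma isPeakFunction_one_add_div_two {X : Type*} {g : X → ℂ} {K : Set X} {x : X}
    (hgx : g x = 1) (hle : ∀ y ∈ K, ‖g y‖ ≤ 1) (hinj : ∀ y ∈ K, g y = 1 → y = x) :
    IsPeakFunction (fun y => (1 + g y) / 2) K x :=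
  ⟨by norm_num [hgx], fun y hy hne =>
    norm_one_add_div_two_lt (hle y hy) fun h => hne (hinj y hy h)⟩

lemma isPeakFunction_div_const {a : ℂ} (ha : a ≠ 0) :
    IsPeakFunction (fun z => (1 + z / a) / 2) {z | ‖z‖ ≤ ‖a‖} a := by
  refine isPeakFunction_one_add_div_two (div_self ha) (fun z hz => ?_) fun z _ h => ?_
  · rw [norm_div]
    exact div_le_one_of_le₀ hz (norm_nonneg a)
  · exact (div_eq_one_iff_eq ha).mp h

lemma isPeakFunction_const_div {a : ℂ} (ha : a ≠ 0) :
    IsPeakFunction (fun z => (1 + a / z) / 2) {z | ‖a‖ ≤ ‖z‖} a := by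
  refine isPeakFunction_one_add_div_two (div_self ha) (fun z hz => ?_) fun z hz h => ?_
  · rw [norm_div]
    exact div_le_one_of_le₀ hz (norm_nonneg z)
  · have hz0 : z ≠ 0 := norm_pos_iff.mp ((norm_pos_iff.mpr ha).trans_le hz)
    exact ((div_eq_one_iff_eq hz0).mp h).symm

lemma exists_isPeakFunction_annulus {ρ R : ℝ} {a : ℂ} (hρ : 0 < ρ) (hρR : ρ ≤ R)
    (ha : ‖a‖ = ρ ∨ ‖a‖ = R) :
    ∃ h : ℂ → ℂ, DifferentiableOn ℂ h {0}ᶜ ∧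
      IsPeakFunction h {z | ρ ≤ ‖z‖ ∧ ‖z‖ ≤ R} a := by
  have ha0 : a ≠ 0 := norm_pos_iff.mp (by rcases ha with h | h <;> linarith)
  rcases ha with ha | ha
  · refine ⟨_, fun z hz => ?_, (isPeakFunction_const_div ha0).mono fun z hz => ?_⟩
    · exact ((differentiableAt_const _).add ((differentiableAt_const a).div
        differentiableAt_id hz)).div_const _ |>.differentiableWithinAt
    · exact ha ▸ hz.1
  · refine ⟨_, by fun_prop, (isPeakFunction_div_const ha0).mono fun z hz => ?_⟩
    exact ha ▸ hz.2

lemma closure_domD_subset :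
    closure domD ⊆ {z : ℂ | 1 / 2 ≤ ‖z‖ ∧ ‖z‖ ≤ 1} ×ˢ {w : ℂ | ‖w‖ ≤ 3} := by
  refine closure_minimal ?_ ?_
  · rintro p ⟨r, φ, hr₁, hr₂, -, -, hz, h₁, h₂, h₃⟩
    have hnorm : ‖p.1‖ = r := by
      rw [hz, norm_mul, norm_exp_ofReal_mul_I, mul_one, Complex.norm_of_nonneg (by linarith)]
    refine ⟨⟨by linarith, by linarith⟩, ?_⟩
    rcases le_or_gt φ (Real.pi / 2) with h | h
    · exact (h₁ h).le.trans (by norm_num)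
    rcases lt_or_ge φ (3 * Real.pi / 2) with h' | h'
    · exact (h₂ h h').le
    · exact (h₃ h').2.le
  · exact ((isClosed_le continuous_const continuous_norm).inter
      (isClosed_le continuous_norm continuous_const)).prod
      (isClosed_le continuous_norm continuous_const)

theorem stmt15 (a b : ℂ)
    (ha : ∃ r φ : ℝ, (r = 1 / 2 ∨ r = 1) ∧ Real.pi / 2 ≤ φ ∧ φ ≤ 2 * Real.pi ∧
      a = (r : ℂ) * Complex.exp (φ * Complex.I))
    (hb : ‖b‖ = 3) :
    ∃ (f : ℂ × ℂ → ℂ) (U : Set (ℂ × ℂ)), IsOpen U ∧ closure domD ⊆ U ∧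
      DifferentiableOn ℂ f U ∧ f (a, b) = 1 ∧
      ∀ p ∈ closure domD, p ≠ (a, b) → ‖f p‖ < 1 := by
  obtain ⟨r, φ, hr, -, -, rfl⟩ := ha
  have hnorm : ‖(r : ℂ) * exp (φ * I)‖ = r := by
    rw [norm_mul, norm_exp_ofReal_mul_I, mul_one,
      Complex.norm_of_nonneg (by rcases hr with rfl | rfl <;> norm_num)]
  obtain ⟨h, hh, hpeak₁⟩ := exists_isPeakFunction_annulus (ρ := 1 / 2) (R := 1) (by norm_num)
    (by norm_num) (hnorm ▸ hr)
  have hpeak₂ := isPeakFunction_div_const (norm_ne_zero_iff.mp (by simp [hb]) : b ≠ 0)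
  have hpeak := (hpeak₁.prod hpeak₂).mono (K' := closure domD)
    (by rw [hb]; exact closure_domD_subset)
  refine ⟨_, Prod.fst ⁻¹' {0}ᶜ, isOpen_compl_singleton.preimage continuous_fst,
    fun p hp h0 => ?_, ?_, hpeak.1, hpeak.2⟩
  · have hlow := (closure_domD_subset hp).1.1
    rw [h0, norm_zero] at hlow
    norm_num at hlow
  · exact (hh.comp (f := Prod.fst) differentiableOn_fst fun p hp => hp).mul (by fun_prop)
end
end
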